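/- arXiv:2006.00870 — 9 statements merged into one kernel-verified Lean document; each statement's English description precedes it below -/
import Mathlib

section
/- Let M, N ∈ ℝ^{(k+n)×(k+n)} be symmetric matrices, partitioned as N = [[N₁₁, N₁₂], [N₁₂ᵀ, N₂₂]] with N₁₁ ∈ ℝ^{k×k} and N₂₂ ∈ ℝ^{n×n}. Assume that N is nonsingular, N₁₁ is positive semidefinite, and N₂₂ is negative definite. Then [I; Z]ᵀ M [I; Z] is positive definite for all Z ∈ ℝ^{n×k} such that [I; Z]ᵀ N [I; Z] is positive semidefinite, if and only if there exists a scalar α ≥ 0 such that M − αN is positive definite. -/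
open Matrix Set
open scoped MatrixOrder

set_option linter.unusedSectionVars false

namespace SLemmaAux

variable {ι : Type*} [Fintype ι]

lemma quad_comb (A : Matrix ι ι ℝ) (a b : ℝ) (x y : ι → ℝ) :
    (a • x + b • y) ⬝ᵥ A *ᵥ (a • x + b • y)
      = a^2 * (x ⬝ᵥ A *ᵥ x) + a*b*(x ⬝ᵥ A *ᵥ y + y ⬝ᵥ A *ᵥ x) + b^2 * (y ⬝ᵥ A *ᵥ y) := by
  simp only [mulVec_add, mulVec_smul, dotProduct_add, add_dotProduct, smul_dotProduct,
    dotProduct_smul, smul_eq_mul]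
  ring

lemma quad_smul (A : Matrix ι ι ℝ) (c : ℝ) (x : ι → ℝ) :
    (c • x) ⬝ᵥ A *ᵥ (c • x) = c^2 * (x ⬝ᵥ A *ᵥ x) := by
  simp only [mulVec_smul, smul_dotProduct, dotProduct_smul, smul_eq_mul]
  ring


/-- a continuous path on the conic `c a² + d a b + c b² = c` from `(1,0)` to `(0,±1)`,
assuming `c * d ≤ 0`. -/
lemma conic_path (c d : ℝ) (hcd : c * d ≤ 0) :
    ∃ a b : ℝ → ℝ, ContinuousOn a (Icc 0 1) ∧ ContinuousOn b (Icc 0 1) ∧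
      a 0 = 1 ∧ b 0 = 0 ∧ a 1 = 0 ∧ (b 1)^2 = 1 ∧
      ∀ t ∈ Icc (0:ℝ) 1, c * (a t)^2 + d * (a t) * (b t) + c * (b t)^2 = c := by
  rcases eq_or_ne c 0 with rfl | hc
  · refine ⟨fun t => max (1 - 2*t) 0, fun t => max (2*t - 1) 0, ?_, ?_, ?_, ?_, ?_, ?_, ?_⟩
    · fun_prop
    · fun_prop
    · norm_num
    · norm_num
    · norm_num
    · norm_num
    · intro t _
      simp only
      rcases le_total (2*t) 1 with h | h
      · have h0 : max (2*t - 1) 0 = 0 := max_eq_right (by linarith)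
        rw [h0]; ring
      · have h0 : max (1 - 2*t) 0 = 0 := max_eq_right (by linarith)
        rw [h0]; ring
  · -- c ≠ 0
    set D : ℝ → ℝ := fun t => c - d/2 * Real.sin (Real.pi * t) with hD
    have hDpos : ∀ t ∈ Icc (0:ℝ) 1, 0 < c / D t ∧ D t ≠ 0 := by
      intro t ht
      have hs0 : 0 ≤ Real.sin (Real.pi * t) :=
        Real.sin_nonneg_of_nonneg_of_le_pi (mul_nonneg Real.pi_pos.le ht.1)
          (by nlinarith [Real.pi_pos, ht.2])
      have hs1 : Real.sin (Real.pi * t) ≤ 1 := Real.sin_le_one _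
      rcases hc.lt_or_gt with hneg | hpos
      · have hd : 0 ≤ d := by nlinarith
        have hle : D t ≤ c := by show c - d/2 * Real.sin (Real.pi * t) ≤ c; nlinarith
        have hDneg : D t < 0 := by linarith
        exact ⟨div_pos_of_neg_of_neg hneg hDneg, hDneg.ne⟩
      · have hd : d ≤ 0 := by nlinarith
        have hle : c ≤ D t := by show c ≤ c - d/2 * Real.sin (Real.pi * t); nlinarith
        have hDpos' : 0 < D t := by linarith
        exact ⟨div_pos hpos hDpos', hDpos'.ne'⟩
    set r : ℝ → ℝ := fun t => Real.sqrt (c / D t) with hr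
    refine ⟨fun t => r t * Real.cos (Real.pi * t / 2),
            fun t => -(r t * Real.sin (Real.pi * t / 2)), ?_, ?_, ?_, ?_, ?_, ?_, ?_⟩
    · apply ContinuousOn.mul
      · apply Real.continuous_sqrt.comp_continuousOn
        exact continuousOn_const.div (by fun_prop) (fun t ht => (hDpos t ht).2)
      · fun_prop
    · apply ContinuousOn.neg
      apply ContinuousOn.mul
      · apply Real.continuous_sqrt.comp_continuousOn
        exact continuousOn_const.div (by fun_prop) (fun t ht => (hDpos t ht).2)
      · fun_prop
    · have : D 0 = c := by simp [hD]
      simp [hr, this, div_self hc]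
    · have : D 0 = c := by simp [hD]
      simp [hr, this, div_self hc]
    · have h0 : Real.cos (Real.pi * 1 / 2) = 0 := by
        rw [mul_one]; exact Real.cos_pi_div_two
      simp only [h0, mul_zero]
    · have h1 : D 1 = c := by simp [hD]
      have h2 : Real.sin (Real.pi * 1 / 2) = 1 := by
        rw [mul_one]; exact Real.sin_pi_div_two
      simp only [h2, hr, h1, div_self hc, Real.sqrt_one, one_mul, neg_neg, mul_one]
      norm_num
    · intro t ht
      have hrsq : (r t)^2 = c / D t := Real.sq_sqrt (hDpos t ht).1.le
      have hsc : Real.sin (Real.pi * t / 2) ^ 2 + Real.cos (Real.pi * t / 2) ^ 2 = 1 :=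
        Real.sin_sq_add_cos_sq _
      have h2m : Real.sin (Real.pi * t) = 2 * Real.sin (Real.pi * t / 2) * Real.cos (Real.pi * t / 2) := by
        have := Real.sin_two_mul (Real.pi * t / 2)
        rw [show 2 * (Real.pi * t / 2) = Real.pi * t by ring] at this
        exact this
      have hDne := (hDpos t ht).2
      have key : c * (r t * Real.cos (Real.pi * t / 2))^2
          + d * (r t * Real.cos (Real.pi * t / 2)) * (-(r t * Real.sin (Real.pi * t / 2)))
          + c * (-(r t * Real.sin (Real.pi * t / 2)))^2
          = (r t)^2 * D t := by
        have hDt : D t = c - d/2 * Real.sin (Real.pi * t) := rfl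
        rw [hDt, h2m]
        linear_combination ((r t)^2 * c) * hsc
      rw [key, hrsq, div_mul_cancel₀ _ hDne]


lemma comb_mem_uIcc (γ δ u v : ℝ) (hγ : 0 ≤ γ) (hδ : 0 ≤ δ) (hsum : γ + δ = 1) :
    γ*u + δ*v ∈ uIcc u v := by
  have h1 : γ*u + δ*v - u = δ*(v-u) := by linear_combination u*hsum
  have h2 : v - (γ*u + δ*v) = γ*(v-u) := by linear_combination (-v)*hsum
  rcases le_total u v with hle | hle
  · rw [uIcc_of_le hle, mem_Icc]
    have n1 : 0 ≤ δ*(v-u) := mul_nonneg hδ (by linarith)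
    have n2 : 0 ≤ γ*(v-u) := mul_nonneg hγ (by linarith)
    constructor <;> linarith
  · rw [uIcc_of_ge hle, mem_Icc]
    have n1 : δ*(v-u) ≤ 0 := mul_nonpos_of_nonneg_of_nonpos hδ (by linarith)
    have n2 : γ*(v-u) ≤ 0 := mul_nonpos_of_nonneg_of_nonpos hγ (by linarith)
    constructor <;> linarith

/-- scalar core of Dines' theorem -/
theorem dines_scalar (qAx qAy qBx qBy cA cB γ δ : ℝ)
    (hγ : 0 ≤ γ) (hδ : 0 ≤ δ) (hsum : γ + δ = 1) :
    ∃ a b : ℝ, a^2*qAx + a*b*cA + b^2*qAy = γ*qAx + δ*qAy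
             ∧ a^2*qBx + a*b*cB + b^2*qBy = γ*qBx + δ*qBy := by
  rcases eq_or_ne ((qAx-qAy)^2 + (qBx-qBy)^2) 0 with hss | hss
  · have h1 : qAx = qAy := by nlinarith [sq_nonneg (qAx-qAy), sq_nonneg (qBx-qBy)]
    have h2 : qBx = qBy := by nlinarith [sq_nonneg (qAx-qAy), sq_nonneg (qBx-qBy)]
    refine ⟨1, 0, ?_, ?_⟩
    · rw [← h1]; linear_combination (-qAx) * hsum
    · rw [← h2]; linear_combination (-qBx) * hsum
  · obtain ⟨σ, hσsq, hcd⟩ :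
        ∃ σ : ℝ, σ^2 = 1 ∧
          (-(qBx-qBy)*qAx + (qAx-qAy)*qBx) * (σ * (-(qBx-qBy)*cA + (qAx-qAy)*cB)) ≤ 0 := by
      rcases le_or_gt 0 ((-(qBx-qBy)*qAx + (qAx-qAy)*qBx) * (-(qBx-qBy)*cA + (qAx-qAy)*cB))
        with h | h
      · exact ⟨-1, by norm_num, by nlinarith⟩
      · exact ⟨1, by norm_num, by nlinarith⟩
    obtain ⟨a, b, hacont, hbcont, ha0, hb0, ha1, hb1, hpath⟩ :=
      conic_path (-(qBx-qBy)*qAx + (qAx-qAy)*qBx) (σ * (-(qBx-qBy)*cA + (qAx-qAy)*cB)) hcd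
    set f : ℝ → ℝ := fun t =>
      (qAx-qAy) * ((a t)^2*qAx + (a t)*(σ*b t)*cA + (σ*b t)^2*qAy)
      + (qBx-qBy) * ((a t)^2*qBx + (a t)*(σ*b t)*cB + (σ*b t)^2*qBy) with hf
    have hfcont : ContinuousOn f (Icc 0 1) := by
      rw [hf]; fun_prop
    have m0 : f 0 = (qAx-qAy)*qAx + (qBx-qBy)*qBx := by
      rw [hf]; simp only [ha0, hb0]; ring
    have m1 : f 1 = (qAx-qAy)*qAy + (qBx-qBy)*qBy := by
      rw [hf]; simp only [ha1]
      linear_combination ((b 1)^2 * ((qAx-qAy)*qAy + (qBx-qBy)*qBy)) * hσsq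
        + ((qAx-qAy)*qAy + (qBx-qBy)*qBy) * hb1
    have hτmem : γ * ((qAx-qAy)*qAx + (qBx-qBy)*qBx) + δ * ((qAx-qAy)*qAy + (qBx-qBy)*qBy)
        ∈ uIcc (f 0) (f 1) := by
      rw [m0, m1]
      exact comb_mem_uIcc _ _ _ _ hγ hδ hsum
    have hsub := intermediate_value_uIcc (a := (0:ℝ)) (b := 1) (f := f)
      (by rwa [uIcc_of_le (by norm_num : (0:ℝ) ≤ 1)])
    obtain ⟨t₀, ht₀, hft₀⟩ := hsub hτmem
    rw [uIcc_of_le (by norm_num : (0:ℝ) ≤ 1)] at ht₀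
    have E1 := hpath t₀ ht₀
    have E2 : (qAx-qAy) * ((a t₀)^2*qAx + (a t₀)*(σ*b t₀)*cA + (σ*b t₀)^2*qAy)
      + (qBx-qBy) * ((a t₀)^2*qBx + (a t₀)*(σ*b t₀)*cB + (σ*b t₀)^2*qBy)
      = γ * ((qAx-qAy)*qAx + (qBx-qBy)*qBx) + δ * ((qAx-qAy)*qAy + (qBx-qBy)*qBy) := hft₀
    have G1 : -(qBx-qBy) * ((a t₀)^2*qAx + (a t₀)*(σ*b t₀)*cA + (σ*b t₀)^2*qAy)
        + (qAx-qAy) * ((a t₀)^2*qBx + (a t₀)*(σ*b t₀)*cB + (σ*b t₀)^2*qBy)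
        = -(qBx-qBy)*qAx + (qAx-qAy)*qBx := by
      linear_combination E1 + ((-(qBx-qBy)*qAx + (qAx-qAy)*qBx) * (b t₀)^2) * hσsq
    have hkey1 : ((qAx-qAy)^2 + (qBx-qBy)^2) *
        (((a t₀)^2*qAx + (a t₀)*(σ*b t₀)*cA + (σ*b t₀)^2*qAy) - (γ*qAx + δ*qAy)) = 0 := by
      linear_combination (qAx-qAy) * E2 - (qBx-qBy) * G1
        + ((qBx-qBy)*(-(qBx-qBy)*qAx + (qAx-qAy)*qBx)) * hsum
    have hkey2 : ((qAx-qAy)^2 + (qBx-qBy)^2) *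
        (((a t₀)^2*qBx + (a t₀)*(σ*b t₀)*cB + (σ*b t₀)^2*qBy) - (γ*qBx + δ*qBy)) = 0 := by
      linear_combination (qBx-qBy) * E2 + (qAx-qAy) * G1
        - ((qAx-qAy)*(-(qBx-qBy)*qAx + (qAx-qAy)*qBx)) * hsum
    have h1 := (mul_eq_zero.mp hkey1).resolve_left hss
    have h2 := (mul_eq_zero.mp hkey2).resolve_left hss
    exact ⟨a t₀, σ * b t₀, sub_eq_zero.mp h1, sub_eq_zero.mp h2⟩


/-- **Dines' theorem** -/
theorem dines (A B : Matrix ι ι ℝ) :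
    Convex ℝ {p : ℝ × ℝ | ∃ x : ι → ℝ, p = (x ⬝ᵥ A *ᵥ x, x ⬝ᵥ B *ᵥ x)} := by
  rintro u ⟨x, rfl⟩ v ⟨y, rfl⟩ γ δ hγ hδ hsum
  obtain ⟨a, b, h1, h2⟩ := dines_scalar (x ⬝ᵥ A *ᵥ x) (y ⬝ᵥ A *ᵥ y) (x ⬝ᵥ B *ᵥ x)
    (y ⬝ᵥ B *ᵥ y) (x ⬝ᵥ A *ᵥ y + y ⬝ᵥ A *ᵥ x) (x ⬝ᵥ B *ᵥ y + y ⬝ᵥ B *ᵥ x) γ δ hγ hδ hsum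
  refine ⟨a • x + b • y, ?_⟩
  rw [Prod.ext_iff]
  constructor
  · simp only [Prod.fst_add, Prod.smul_fst, smul_eq_mul, quad_comb]
    linarith [h1]
  · simp only [Prod.snd_add, Prod.smul_snd, smul_eq_mul, quad_comb]
    linarith [h2]

/-- **Non-strict S-lemma** (Yakubovich). -/
theorem s_lemma_nonstrict (A B : Matrix ι ι ℝ)
    (hslater : ∃ x : ι → ℝ, 0 < x ⬝ᵥ A *ᵥ x)
    (h : ∀ x : ι → ℝ, 0 ≤ x ⬝ᵥ A *ᵥ x → 0 ≤ x ⬝ᵥ B *ᵥ x) :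
    ∃ α : ℝ, 0 ≤ α ∧ ∀ x : ι → ℝ, α * (x ⬝ᵥ A *ᵥ x) ≤ x ⬝ᵥ B *ᵥ x := by
  classical
  set D : Set (ℝ × ℝ) := {p : ℝ × ℝ | ∃ x : ι → ℝ, p = (x ⬝ᵥ A *ᵥ x, x ⬝ᵥ B *ᵥ x)} with hD
  set Q : Set (ℝ × ℝ) := {p : ℝ × ℝ | 0 < p.1 ∧ p.2 < 0} with hQ
  have hQconv : Convex ℝ Q := by
    rintro p ⟨hp1, hp2⟩ q ⟨hq1, hq2⟩ γ δ hγ hδ hsum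
    constructor
    · show 0 < γ * p.1 + δ * q.1
      rcases eq_or_lt_of_le hγ with hγ0 | hγ0
      · rw [← hγ0] at hsum ⊢; simp at hsum ⊢; nlinarith
      · nlinarith
    · show γ * p.2 + δ * q.2 < 0
      rcases eq_or_lt_of_le hγ with hγ0 | hγ0
      · rw [← hγ0] at hsum ⊢; simp at hsum ⊢; nlinarith
      · nlinarith
  have hQopen : IsOpen Q :=
    (isOpen_lt continuous_const continuous_fst).inter (isOpen_lt continuous_snd continuous_const)
  have hdisj : Disjoint Q D := by
    rw [disjoint_left]
    rintro p ⟨hp1, hp2⟩ ⟨x, rfl⟩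
    exact absurd (h x (le_of_lt hp1)) (not_le.mpr hp2)
  obtain ⟨f, u, hfQ, hfD⟩ := geometric_hahn_banach_open hQconv hQopen (dines A B) hdisj
  have h0D : (0 : ℝ × ℝ) ∈ D := ⟨0, by simp; rfl⟩
  have hu0 : u ≤ 0 := by simpa using hfD 0 h0D
  have hflin : ∀ p : ℝ × ℝ, f p = p.1 * f (1,0) + p.2 * f (0,1) := by
    intro p
    have hp : p = p.1 • ((1:ℝ),(0:ℝ)) + p.2 • ((0:ℝ),(1:ℝ)) := by
      apply Prod.ext <;> simp
    calc f p = f (p.1 • ((1:ℝ),(0:ℝ)) + p.2 • ((0:ℝ),(1:ℝ))) := by rw [← hp]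
    _ = p.1 * f (1,0) + p.2 * f (0,1) := by
        rw [f.map_add, f.map_smul, f.map_smul]; simp
  have hc1 : f (1,0) ≤ 0 := by
    by_contra hpos
    push_neg at hpos
    have ht : (0:ℝ) < (|f (0,1)| + 1) / f (1,0) := div_pos (by positivity) hpos
    have hmem : ((|f (0,1)| + 1) / f (1,0), (-1:ℝ)) ∈ Q := ⟨ht, by norm_num⟩
    have hlt := hfQ _ hmem
    rw [hflin] at hlt
    simp only at hlt
    rw [div_mul_cancel₀ _ (ne_of_gt hpos)] at hlt
    have := le_abs_self (f (0,1))
    linarith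
  have hc2 : 0 ≤ f (0,1) := by
    by_contra hneg
    push_neg at hneg
    have ht : (0:ℝ) < (|f (1,0)| + 1) / (-f (0,1)) := div_pos (by positivity) (by linarith)
    have hmem : ((1:ℝ), -((|f (1,0)| + 1) / (-f (0,1)))) ∈ Q := ⟨one_pos, by
      simp only [neg_lt, neg_zero]; exact ht⟩
    have hlt := hfQ _ hmem
    rw [hflin] at hlt
    simp only at hlt
    have hcalc : -((|f (1,0)| + 1) / (-f (0,1))) * f (0,1) = |f (1,0)| + 1 := by
      rw [div_neg, neg_neg, div_mul_cancel₀ _ (ne_of_lt hneg)]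
    rw [hcalc] at hlt
    have := neg_abs_le (f (1,0))
    linarith
  have hDpos : ∀ x : ι → ℝ, 0 ≤ f (1,0) * (x ⬝ᵥ A *ᵥ x) + f (0,1) * (x ⬝ᵥ B *ᵥ x) := by
    intro x
    by_contra hw
    push_neg at hw
    set w := f (1,0) * (x ⬝ᵥ A *ᵥ x) + f (0,1) * (x ⬝ᵥ B *ᵥ x) with hwdef
    set t := Real.sqrt (u / w) + 1 with htdef
    have hsq : Real.sqrt (u / w) ^ 2 = u / w := Real.sq_sqrt (by
      exact div_nonneg_iff.mpr (Or.inr ⟨hu0, le_of_lt hw⟩))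
    have htsq : u / w < t ^ 2 := by
      rw [htdef]
      nlinarith [Real.sqrt_nonneg (u / w)]
    have hlt : t^2 * w < u := by
      rw [div_lt_iff_of_neg hw] at htsq
      linarith
    have hin : ((t • x) ⬝ᵥ A *ᵥ (t • x), (t • x) ⬝ᵥ B *ᵥ (t • x)) ∈ D := ⟨t • x, rfl⟩
    have hval := hfD _ hin
    rw [hflin] at hval
    simp only [quad_smul] at hval
    have hval2 : u ≤ t^2 * w := by rw [hwdef]; nlinarith [hval]
    linarith
  rcases eq_or_lt_of_le hc2 with hc20 | hc2pos
  · exfalso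
    have hQne : ((1:ℝ), (-1:ℝ)) ∈ Q := ⟨one_pos, by norm_num⟩
    have hlt := hfQ _ hQne
    rw [hflin] at hlt
    simp only at hlt
    rw [← hc20] at hlt
    have hc1neg : f (1,0) < 0 := by linarith
    obtain ⟨xs, hxs⟩ := hslater
    have hd := hDpos xs
    rw [← hc20] at hd
    nlinarith
  · refine ⟨-(f (1,0)) / f (0,1), div_nonneg (neg_nonneg.mpr hc1) hc2, fun x => ?_⟩
    rw [div_mul_eq_mul_div, div_le_iff₀ hc2pos]
    have := hDpos x
    nlinarith


lemma quad_cont (A : Matrix ι ι ℝ) : Continuous fun x : ι → ℝ => x ⬝ᵥ A *ᵥ x := by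
  have hrw : (fun x : ι → ℝ => x ⬝ᵥ A *ᵥ x) = fun x => ∑ i, x i * ∑ j, A i j * x j := rfl
  rw [hrw]
  apply continuous_finset_sum
  intro i _
  exact (continuous_apply i).mul
    (continuous_finset_sum _ fun j _ => continuous_const.mul (continuous_apply j))

lemma quad_scale_ineq (A : Matrix ι ι ℝ) (x : ι → ℝ) (hx : x ≠ 0) :
    x ⬝ᵥ A *ᵥ x = ‖x‖^2 * ((‖x‖⁻¹ • x) ⬝ᵥ A *ᵥ (‖x‖⁻¹ • x)) := by
  rw [quad_smul]
  have hn : ‖x‖ ≠ 0 := norm_ne_zero_iff.mpr hx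
  field_simp

lemma norm_inv_smul_mem_sphere (x : ι → ℝ) (hx : x ≠ 0) :
    (‖x‖⁻¹ • x) ∈ Metric.sphere (0 : ι → ℝ) 1 := by
  have hn : ‖x‖ ≠ 0 := norm_ne_zero_iff.mpr hx
  simp only [Metric.mem_sphere, dist_zero_right, norm_smul, norm_inv, norm_norm]
  field_simp

lemma self_dot_le (x : ι → ℝ) : x ⬝ᵥ x ≤ (Fintype.card ι : ℝ) * ‖x‖^2 := by
  have h1 : ∀ i, x i * x i ≤ ‖x‖^2 := by
    intro i
    have := norm_le_pi_norm x i
    rw [Real.norm_eq_abs] at this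
    nlinarith [abs_nonneg (x i), le_abs_self (x i), neg_abs_le (x i)]
  calc x ⬝ᵥ x = ∑ i, x i * x i := rfl
  _ ≤ ∑ _i : ι, ‖x‖^2 := Finset.sum_le_sum fun i _ => h1 i
  _ = (Fintype.card ι : ℝ) * ‖x‖^2 := by
      rw [Finset.sum_const, nsmul_eq_mul, Fintype.card]

lemma self_dot_pos (x : ι → ℝ) (hx : x ≠ 0) : 0 < x ⬝ᵥ x := by
  obtain ⟨i, hi⟩ := Function.ne_iff.mp hx
  have : (0:ℝ) < x i * x i := by
    rcases lt_or_gt_of_ne (show x i ≠ 0 from hi) with h | h <;> nlinarith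
  exact Finset.sum_pos' (fun j _ => mul_self_nonneg (x j)) ⟨i, Finset.mem_univ i, this⟩

/-- **Strict S-lemma**. -/
theorem s_lemma_strict (A B : Matrix ι ι ℝ)
    (hslater : ∃ x : ι → ℝ, 0 < x ⬝ᵥ A *ᵥ x)
    (h : ∀ x : ι → ℝ, x ≠ 0 → 0 ≤ x ⬝ᵥ A *ᵥ x → 0 < x ⬝ᵥ B *ᵥ x) :
    ∃ α : ℝ, 0 ≤ α ∧ ∀ x : ι → ℝ, x ≠ 0 → α * (x ⬝ᵥ A *ᵥ x) < x ⬝ᵥ B *ᵥ x := by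
  classical
  obtain ⟨xs, hxs⟩ := hslater
  have hxs0 : xs ≠ 0 := by
    rintro rfl
    simp at hxs
  have hcard : 0 < (Fintype.card ι : ℝ) := by
    have : Nonempty ι := by
      obtain ⟨i, _⟩ := Function.ne_iff.mp hxs0
      exact ⟨i⟩
    exact_mod_cast Fintype.card_pos
  set K : Set (ι → ℝ) := Metric.sphere (0 : ι → ℝ) 1 ∩ {x | 0 ≤ x ⬝ᵥ A *ᵥ x} with hK
  have hKcompact : IsCompact K :=
    (isCompact_sphere 0 1).inter_right (isClosed_le continuous_const (quad_cont A))
  have hKne : K.Nonempty := by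
    refine ⟨‖xs‖⁻¹ • xs, norm_inv_smul_mem_sphere xs hxs0, ?_⟩
    simp only [Set.mem_setOf_eq, quad_smul]
    positivity
  obtain ⟨x0, hx0K, hmin⟩ := hKcompact.exists_isMinOn hKne (quad_cont B).continuousOn
  have hx0ne : x0 ≠ 0 := by
    intro h0
    have := hx0K.1
    rw [h0] at this
    simp at this
  have hε : 0 < x0 ⬝ᵥ B *ᵥ x0 := h x0 hx0ne hx0K.2
  set ε := (x0 ⬝ᵥ B *ᵥ x0) / (Fintype.card ι : ℝ) with hεdef
  have hεpos : 0 < ε := div_pos hε hcard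
  -- the relaxed nonstrict hypothesis
  have hrelax : ∀ x : ι → ℝ, 0 ≤ x ⬝ᵥ A *ᵥ x → 0 ≤ x ⬝ᵥ B *ᵥ x - ε * (x ⬝ᵥ x) := by
    intro x hxA
    rcases eq_or_ne x 0 with rfl | hx0
    · simp
    · have hu : (‖x‖⁻¹ • x) ∈ K := by
        refine ⟨norm_inv_smul_mem_sphere x hx0, ?_⟩
        simp only [Set.mem_setOf_eq, quad_smul]
        positivity
      have hminx := hmin hu
      have hBx : x ⬝ᵥ B *ᵥ x = ‖x‖^2 * ((‖x‖⁻¹ • x) ⬝ᵥ B *ᵥ (‖x‖⁻¹ • x)) := quad_scale_ineq B x hx0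
      have hd : x ⬝ᵥ x ≤ (Fintype.card ι : ℝ) * ‖x‖^2 := self_dot_le x
      have hmono : (x0 ⬝ᵥ B *ᵥ x0) ≤ (‖x‖⁻¹ • x) ⬝ᵥ B *ᵥ (‖x‖⁻¹ • x) := hminx
      have hεc : ε * (Fintype.card ι : ℝ) = x0 ⬝ᵥ B *ᵥ x0 := by
        rw [hεdef]; field_simp
      nlinarith [sq_nonneg ‖x‖, hεpos.le, mul_le_mul_of_nonneg_left hmono (sq_nonneg ‖x‖),
        mul_le_mul_of_nonneg_left hd hεpos.le]
  -- apply nonstrict S-lemma to (A, B - ε•1)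
  have hq : ∀ x : ι → ℝ, x ⬝ᵥ (B - ε • (1 : Matrix ι ι ℝ)) *ᵥ x = x ⬝ᵥ B *ᵥ x - ε * (x ⬝ᵥ x) := by
    intro x
    rw [sub_mulVec, smul_mulVec, one_mulVec, dotProduct_sub, dotProduct_smul, smul_eq_mul]
  obtain ⟨α, hα, hineq⟩ := s_lemma_nonstrict A (B - ε • (1 : Matrix ι ι ℝ)) ⟨xs, hxs⟩
    (fun x hx => by rw [hq]; exact hrelax x hx)
  refine ⟨α, hα, fun x hx => ?_⟩
  have := hineq x
  rw [hq] at this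
  have := self_dot_pos x hx
  nlinarith
/-- existence of `α` making `M - α N` positive definite when `N` is negative definite -/
theorem exists_alpha_neg (Mm Nn : Matrix ι ι ℝ)
    (hNneg : ∀ x : ι → ℝ, x ≠ 0 → x ⬝ᵥ Nn *ᵥ x < 0) :
    ∃ α : ℝ, 0 ≤ α ∧ ∀ x : ι → ℝ, x ≠ 0 → α * (x ⬝ᵥ Nn *ᵥ x) < x ⬝ᵥ Mm *ᵥ x := by
  classical
  by_cases hempty : IsEmpty ι
  · refine ⟨0, le_refl 0, fun x hx => absurd ?_ hx⟩
    funext i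
    exact hempty.elim i
  · rw [not_isEmpty_iff] at hempty
    have hsne : (Metric.sphere (0 : ι → ℝ) 1).Nonempty := by
      refine ⟨fun _ => 1, ?_⟩
      simp only [Metric.mem_sphere, dist_zero_right]
      rw [pi_norm_const]
      norm_num
    obtain ⟨xM, _, hminM⟩ := (isCompact_sphere (0 : ι → ℝ) 1).exists_isMinOn hsne
      (quad_cont Mm).continuousOn
    obtain ⟨xN, hxNs, hminN⟩ := (isCompact_sphere (0 : ι → ℝ) 1).exists_isMinOn hsne
      (quad_cont (-Nn)).continuousOn
    set cM := xM ⬝ᵥ Mm *ᵥ xM with hcM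
    set cN := xN ⬝ᵥ (-Nn) *ᵥ xN with hcN
    have hxNne : xN ≠ 0 := by
      intro h0
      rw [h0] at hxNs
      simp at hxNs
    have hcNpos : 0 < cN := by
      rw [hcN, neg_mulVec, dotProduct_neg]
      linarith [hNneg xN hxNne]
    set α := max 0 ((1 - cM)/cN) with hα
    refine ⟨α, le_max_left _ _, fun x hx => ?_⟩
    have hu := norm_inv_smul_mem_sphere x hx
    set u := ‖x‖⁻¹ • x with hudef
    have hMu : cM ≤ u ⬝ᵥ Mm *ᵥ u := hminM hu
    have hNu : cN ≤ u ⬝ᵥ (-Nn) *ᵥ u := hminN hu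
    have hNu' : u ⬝ᵥ Nn *ᵥ u ≤ -cN := by
      rw [neg_mulVec, dotProduct_neg] at hNu
      linarith
    have hαcN : 1 - cM ≤ α * cN := by
      rcases le_total ((1 - cM)/cN) 0 with h0 | h0
      · have hα0 : α = 0 := by rw [hα, max_eq_left h0]
        rw [hα0, zero_mul]
        have hid : (1 - cM)/cN * cN = 1 - cM := div_mul_cancel₀ _ (ne_of_gt hcNpos)
        nlinarith [mul_le_mul_of_nonneg_right h0 hcNpos.le]
      · have : α = (1 - cM)/cN := by rw [hα, max_eq_right h0]
        rw [this, div_mul_cancel₀ _ (ne_of_gt hcNpos)]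
    have hsphere_ineq : α * (u ⬝ᵥ Nn *ᵥ u) < u ⬝ᵥ Mm *ᵥ u := by
      have h1 : α * (u ⬝ᵥ Nn *ᵥ u) ≤ α * (-cN) :=
        mul_le_mul_of_nonneg_left hNu' (le_max_left _ _)
      nlinarith
    have hMx : x ⬝ᵥ Mm *ᵥ x = ‖x‖^2 * (u ⬝ᵥ Mm *ᵥ u) := quad_scale_ineq Mm x hx
    have hNx : x ⬝ᵥ Nn *ᵥ x = ‖x‖^2 * (u ⬝ᵥ Nn *ᵥ u) := quad_scale_ineq Nn x hx
    have hnormpos : 0 < ‖x‖^2 := by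
      have : ‖x‖ ≠ 0 := norm_ne_zero_iff.mpr hx
      positivity
    rw [hMx, hNx]
    nlinarith [hsphere_ineq, hnormpos]


lemma self_dot_nonneg (x : ι → ℝ) : 0 ≤ x ⬝ᵥ x :=
  Finset.sum_nonneg fun i _ => mul_self_nonneg (x i)

lemma quad_smul' (A : Matrix ι ι ℝ) (c : ℝ) (x : ι → ℝ) :
    (c • x) ⬝ᵥ A *ᵥ (c • x) = c^2 * (x ⬝ᵥ A *ᵥ x) := by
  simp only [mulVec_smul, smul_dotProduct, dotProduct_smul, smul_eq_mul]
  ring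

lemma star_eq (x : ι → ℝ) : star x = x := star_trivial x

lemma herm_of_symm {A : Matrix ι ι ℝ} (h : A.IsSymm) : A.IsHermitian := by
  rw [Matrix.IsHermitian, conjTranspose_eq_transpose_of_trivial, h]

lemma posdef_quad {A : Matrix ι ι ℝ} (hA : A.PosDef) (x : ι → ℝ) (hx : x ≠ 0) :
    0 < x ⬝ᵥ A *ᵥ x := by
  have := hA.dotProduct_mulVec_pos hx
  rwa [star_eq] at this

lemma possemidef_quad {A : Matrix ι ι ℝ} (hA : A.PosSemidef) (x : ι → ℝ) :
    0 ≤ x ⬝ᵥ A *ᵥ x := by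
  have := hA.dotProduct_mulVec_nonneg x
  rwa [star_eq] at this

lemma posdef_of {A : Matrix ι ι ℝ} (hherm : A.IsHermitian)
    (h : ∀ x : ι → ℝ, x ≠ 0 → 0 < x ⬝ᵥ A *ᵥ x) : A.PosDef :=
  PosDef.of_dotProduct_mulVec_pos hherm fun x hx => by rw [star_eq]; exact h x hx

lemma possemidef_of {A : Matrix ι ι ℝ} (hherm : A.IsHermitian)
    (h : ∀ x : ι → ℝ, 0 ≤ x ⬝ᵥ A *ᵥ x) : A.PosSemidef :=
  PosSemidef.of_dotProduct_mulVec_nonneg hherm fun x => by rw [star_eq]; exact h x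

lemma quad_congr {κ : Type*} [Fintype κ] (A : Matrix ι ι ℝ) (L : Matrix ι κ ℝ) (w : κ → ℝ) :
    w ⬝ᵥ (Lᵀ * A * L) *ᵥ w = (L *ᵥ w) ⬝ᵥ A *ᵥ (L *ᵥ w) := by
  rw [← mulVec_mulVec, ← mulVec_mulVec, dotProduct_mulVec w Lᵀ, vecMul_transpose]

lemma quad_sub_smul (M N : Matrix ι ι ℝ) (α : ℝ) (x : ι → ℝ) :
    x ⬝ᵥ (M - α • N) *ᵥ x = x ⬝ᵥ M *ᵥ x - α * (x ⬝ᵥ N *ᵥ x) := by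
  rw [sub_mulVec, smul_mulVec, dotProduct_sub, dotProduct_smul, smul_eq_mul]

lemma symm_conj {κ : Type*} [Fintype κ] {A : Matrix ι ι ℝ} (hA : A.IsSymm)
    (L : Matrix ι κ ℝ) : (Lᵀ * A * L).IsSymm := by
  show _ = _
  rw [transpose_mul, transpose_mul, transpose_transpose, hA, ← Matrix.mul_assoc]

lemma posdef_M_sub_smul [DecidableEq ι] {M N : Matrix ι ι ℝ} (hM : M.IsSymm) (hN : N.IsSymm)
    (α : ℝ) (h : ∀ x : ι → ℝ, x ≠ 0 → α * (x ⬝ᵥ N *ᵥ x) < x ⬝ᵥ M *ᵥ x) :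
    (M - α • N).PosDef := by
  apply posdef_of
  · apply herm_of_symm
    show _ = _
    rw [transpose_sub, transpose_smul, hM, hN]
  · intro x hx
    rw [quad_sub_smul]
    linarith [h x hx]

lemma quad_fromBlocks {κ₁ κ₂ : Type*} [Fintype κ₁] [Fintype κ₂]
    (A : Matrix κ₁ κ₁ ℝ) (B : Matrix κ₁ κ₂ ℝ) (C : Matrix κ₂ κ₁ ℝ) (D : Matrix κ₂ κ₂ ℝ)
    (u : κ₁ → ℝ) (v : κ₂ → ℝ) :
    (Sum.elim u v) ⬝ᵥ (fromBlocks A B C D) *ᵥ (Sum.elim u v)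
      = u ⬝ᵥ A *ᵥ u + u ⬝ᵥ B *ᵥ v + v ⬝ᵥ C *ᵥ u + v ⬝ᵥ D *ᵥ v := by
  rw [fromBlocks_mulVec, Sum.elim_comp_inl, Sum.elim_comp_inr, sumElim_dotProduct_sumElim,
    dotProduct_add, dotProduct_add]
  ring


end SLemmaAux

open SLemmaAux

set_option maxHeartbeats 2000000 in
/-- Strict matrix S-lemma under block assumptions on `N`
(Corollary 1 of van Waarde–Camlibel–Mesbahi, derived from Scherer's LMI relaxations). -/
theorem strict_matrix_S_lemma_block {k n : ℕ}
    (M : Matrix (Fin k ⊕ Fin n) (Fin k ⊕ Fin n) ℝ)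
    (N11 : Matrix (Fin k) (Fin k) ℝ) (N12 : Matrix (Fin k) (Fin n) ℝ)
    (N22 : Matrix (Fin n) (Fin n) ℝ)
    (N : Matrix (Fin k ⊕ Fin n) (Fin k ⊕ Fin n) ℝ)
    (hNdef : N = fromBlocks N11 N12 N12ᵀ N22)
    (hM : M.IsSymm) (hN : N.IsSymm)
    (hNns : IsUnit N.det) (hN11 : N11.PosSemidef) (hN22 : (-N22).PosDef) :
    (∀ Z : Matrix (Fin n) (Fin k) ℝ, ((fromRows (1 : Matrix (Fin k) (Fin k) ℝ) Z)ᵀ * N * fromRows (1 : Matrix (Fin k) (Fin k) ℝ) Z).PosSemidef →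
        ((fromRows (1 : Matrix (Fin k) (Fin k) ℝ) Z)ᵀ * M * fromRows (1 : Matrix (Fin k) (Fin k) ℝ) Z).PosDef) ↔
      ∃ α : ℝ, 0 ≤ α ∧ (M - α • N).PosDef := by
  classical
  constructor
  · -- forward direction
    intro H
    rcases Nat.eq_zero_or_pos k with hk0 | hkpos
    · -- k = 0 : N is negative definite
      subst hk0
      have hNneg : ∀ x : Fin 0 ⊕ Fin n → ℝ, x ≠ 0 → x ⬝ᵥ N *ᵥ x < 0 := by
        intro x hx
        have hxe : Sum.elim (x ∘ Sum.inl) (x ∘ Sum.inr) = x := Sum.elim_comp_inl_inr x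
        have hx2 : x ∘ Sum.inr ≠ 0 := by
          intro h0
          apply hx
          funext i
          cases i with
          | inl i => exact i.elim0
          | inr i => exact congrFun h0 i
        have hq : x ⬝ᵥ N *ᵥ x = (x ∘ Sum.inr) ⬝ᵥ N22 *ᵥ (x ∘ Sum.inr) := by
          conv_lhs => rw [← hxe]
          rw [hNdef, quad_fromBlocks]
          have t1 : (x ∘ Sum.inl) ⬝ᵥ N11 *ᵥ (x ∘ Sum.inl) = 0 := by simp [dotProduct]
          have t2 : (x ∘ Sum.inl) ⬝ᵥ N12 *ᵥ (x ∘ Sum.inr) = 0 := by simp [dotProduct]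
          have t3 : (x ∘ Sum.inr) ⬝ᵥ N12ᵀ *ᵥ (x ∘ Sum.inl) = 0 := by
            have hz : N12ᵀ *ᵥ (x ∘ Sum.inl) = 0 := by
              funext j; simp [mulVec, dotProduct]
            rw [hz, dotProduct_zero]
          rw [t1, t2, t3]
          ring
        rw [hq]
        have hpos := posdef_quad hN22 (x ∘ Sum.inr) hx2
        rw [neg_mulVec, dotProduct_neg] at hpos
        linarith
      obtain ⟨α, hα, hineq⟩ := exists_alpha_neg M N hNneg
      exact ⟨α, hα, posdef_M_sub_smul hM hN α hineq⟩
    · -- k ≥ 1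
      have hN22sym : N22ᵀ = N22 := by
        have h := hN22.1
        rw [Matrix.IsHermitian, conjTranspose_neg, neg_inj,
          conjTranspose_eq_transpose_of_trivial] at h
        exact h
      have hN22det : IsUnit N22.det := by
        have hd := hN22.det_pos
        rw [det_neg] at hd
        refine isUnit_iff_ne_zero.mpr fun h0 => ?_
        rw [h0, mul_zero] at hd
        exact lt_irrefl 0 hd
      have hN22inv' : N22 * N22⁻¹ = 1 := mul_nonsing_inv _ hN22det
      have hinvN22 : N22⁻¹ * N22 = 1 := nonsing_inv_mul _ hN22det
      have hninv : (-N22)⁻¹ = -(N22⁻¹) := by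
        apply Matrix.inv_eq_right_inv
        rw [Matrix.neg_mul, Matrix.mul_neg, neg_neg, hN22inv']
      set G : Matrix (Fin n) (Fin k) ℝ := N22⁻¹ * N12ᵀ with hG
      set S : Matrix (Fin k) (Fin k) ℝ := N11 - N12 * N22⁻¹ * N12ᵀ with hS
      have hGt : Gᵀ = N12 * N22⁻¹ := by
        rw [hG, transpose_mul, transpose_transpose, transpose_nonsing_inv, hN22sym]
      have hdecomp : N = (fromBlocks 1 0 G 1)ᵀ * fromBlocks S 0 0 N22 * fromBlocks 1 0 G 1 := by
        rw [fromBlocks_transpose, hNdef]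
        simp only [transpose_one, transpose_zero]
        rw [fromBlocks_multiply, fromBlocks_multiply]
        simp only [Matrix.mul_one, Matrix.one_mul, Matrix.mul_zero, Matrix.zero_mul,
          add_zero, zero_add]
        refine fromBlocks_inj.mpr ⟨?_, ?_, ?_, ?_⟩
        · rw [hGt, hS]
          have h1 : N12 * N22⁻¹ * N22 * G = N12 * N22⁻¹ * N12ᵀ := by
            rw [Matrix.mul_assoc (N12 * N22⁻¹) N22 G, hG, ← Matrix.mul_assoc N22 N22⁻¹ N12ᵀ,
              hN22inv', Matrix.one_mul]
          rw [h1, sub_add_cancel]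
        · rw [hGt, Matrix.mul_assoc, hinvN22, Matrix.mul_one]
        · rw [hG, ← Matrix.mul_assoc, hN22inv', Matrix.one_mul]
        · rfl
      have hdetS : IsUnit S.det := by
        have h := hNns
        rw [hdecomp, det_mul, det_mul, det_transpose, det_fromBlocks_zero₁₂,
          det_fromBlocks_zero₁₂] at h
        simp only [det_one, one_mul, mul_one] at h
        rw [isUnit_iff_ne_zero] at h ⊢
        intro h0
        apply h
        rw [h0, zero_mul]
      have hSpsd : S.PosSemidef := by
        have hinv : ((-N22)⁻¹).PosDef := hN22.inv
        have h2 := hinv.posSemidef.mul_mul_conjTranspose_same N12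
        rw [conjTranspose_eq_transpose_of_trivial] at h2
        have heq : S = N11 + N12 * (-N22)⁻¹ * N12ᵀ := by
          rw [hninv, hS, Matrix.mul_neg, Matrix.neg_mul, sub_eq_add_neg]
        rw [heq]
        exact hN11.add h2
      have hSpd : S.PosDef := by
        apply posdef_of hSpsd.1
        intro x hx
        rcases lt_or_eq_of_le (possemidef_quad hSpsd x) with h | h
        · exact h
        · exfalso
          have h0 : S *ᵥ x = 0 := by
            apply (hSpsd.dotProduct_mulVec_zero_iff x).mp
            rw [star_eq]
            exact h.symm
          have hinj : Function.Injective (S.mulVec) :=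
            mulVec_injective_iff_isUnit.mpr ((isUnit_iff_isUnit_det S).mpr hdetS)
          apply hx
          apply hinj
          rw [h0, mulVec_zero]
      obtain ⟨P, hPP, hPsym, hPdet⟩ : ∃ P : Matrix (Fin k) (Fin k) ℝ,
          P * P = S ∧ Pᵀ = P ∧ IsUnit P.det := by
        refine ⟨CFC.sqrt (S), CFC.sqrt_mul_sqrt_self (S) hSpd.posSemidef.nonneg, ?_, ?_⟩
        · have h := (nonneg_iff_posSemidef.mp (CFC.sqrt_nonneg (S))).1
          rwa [Matrix.IsHermitian, conjTranspose_eq_transpose_of_trivial] at h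
        · rw [isUnit_iff_ne_zero]
          intro h0
          have hds : S.det = 0 := by
            rw [← CFC.sqrt_mul_sqrt_self (S) hSpd.posSemidef.nonneg, det_mul, h0, zero_mul]
          rw [isUnit_iff_ne_zero] at hdetS
          exact hdetS hds
      obtain ⟨Q, hQQ, hQsym, hQdet⟩ : ∃ Q : Matrix (Fin n) (Fin n) ℝ,
          Q * Q = -N22 ∧ Qᵀ = Q ∧ IsUnit Q.det := by
        refine ⟨CFC.sqrt (-N22), CFC.sqrt_mul_sqrt_self (-N22) hN22.posSemidef.nonneg, ?_, ?_⟩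
        · have h := (nonneg_iff_posSemidef.mp (CFC.sqrt_nonneg (-N22))).1
          rwa [Matrix.IsHermitian, conjTranspose_eq_transpose_of_trivial] at h
        · rw [isUnit_iff_ne_zero]
          intro h0
          have hdq : (-N22).det = 0 := by
            rw [← CFC.sqrt_mul_sqrt_self (-N22) hN22.posSemidef.nonneg, det_mul, h0, zero_mul]
          exact hN22.det_pos.ne' hdq
      set J : Matrix (Fin k ⊕ Fin n) (Fin k ⊕ Fin n) ℝ := fromBlocks 1 0 0 (-1) with hJ
      set V : Matrix (Fin k ⊕ Fin n) (Fin k ⊕ Fin n) ℝ :=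
        fromBlocks P 0 0 Q * fromBlocks 1 0 G 1 with hV
      have hVdet : IsUnit V.det := by
        rw [hV, det_mul, det_fromBlocks_zero₁₂, det_fromBlocks_zero₁₂]
        simp only [det_one, one_mul, mul_one]
        exact hPdet.mul hQdet
      have hmid : (fromBlocks P 0 0 Q)ᵀ * J * fromBlocks P 0 0 Q = fromBlocks S 0 0 N22 := by
        rw [hJ, fromBlocks_transpose, fromBlocks_multiply, fromBlocks_multiply]
        simp only [transpose_zero, Matrix.mul_one, Matrix.one_mul, Matrix.mul_zero,
          Matrix.zero_mul, add_zero, zero_add, Matrix.mul_neg, Matrix.neg_mul, neg_zero, neg_neg]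
        refine fromBlocks_inj.mpr ⟨?_, ?_, ?_, ?_⟩
        · rw [hPsym, hPP]
        · rfl
        · rfl
        · rw [hQsym, hQQ, neg_neg]
      have hNVJV : N = Vᵀ * J * V := by
        have hassoc : Vᵀ * J * V = (fromBlocks 1 0 G 1)ᵀ *
            ((fromBlocks P 0 0 Q)ᵀ * J * fromBlocks P 0 0 Q) * fromBlocks 1 0 G 1 := by
          rw [hV, transpose_mul]
          simp only [Matrix.mul_assoc]
        rw [hassoc, hmid]
        exact hdecomp
      have hquadN : ∀ x : Fin k ⊕ Fin n → ℝ, x ⬝ᵥ N *ᵥ x = (V *ᵥ x) ⬝ᵥ J *ᵥ (V *ᵥ x) := by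
        intro x
        conv_lhs => rw [hNVJV]
        rw [quad_congr]
      have hquadJ : ∀ (u : Fin k → ℝ) (v : Fin n → ℝ),
          (Sum.elim u v) ⬝ᵥ J *ᵥ (Sum.elim u v) = u ⬝ᵥ u - v ⬝ᵥ v := by
        intro u v
        rw [hJ, quad_fromBlocks, one_mulVec, zero_mulVec, zero_mulVec, dotProduct_zero,
          dotProduct_zero, neg_mulVec, one_mulVec, dotProduct_neg]
        ring
      have hVV : ∀ z : Fin k ⊕ Fin n → ℝ, V *ᵥ (V⁻¹ *ᵥ z) = z := by
        intro z; rw [mulVec_mulVec, mul_nonsing_inv _ hVdet, one_mulVec]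
      have hV'V : ∀ z : Fin k ⊕ Fin n → ℝ, V⁻¹ *ᵥ (V *ᵥ z) = z := by
        intro z; rw [mulVec_mulVec, nonsing_inv_mul _ hVdet, one_mulVec]
      have hslater : ∃ x : Fin k ⊕ Fin n → ℝ, 0 < x ⬝ᵥ N *ᵥ x := by
        refine ⟨V⁻¹ *ᵥ Sum.elim (fun _ => 1) 0, ?_⟩
        rw [hquadN, hVV, hquadJ]
        have h1 : (fun _ : Fin k => (1:ℝ)) ⬝ᵥ (fun _ => 1) = (k : ℝ) := by
          simp [dotProduct]
        have h2 : (0 : Fin n → ℝ) ⬝ᵥ (0 : Fin n → ℝ) = 0 := by simp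
        rw [h1, h2, sub_zero]
        exact_mod_cast hkpos
      have hvec : ∀ x : Fin k ⊕ Fin n → ℝ, x ≠ 0 → 0 ≤ x ⬝ᵥ N *ᵥ x → 0 < x ⬝ᵥ M *ᵥ x := by
        intro x hx hxN
        set u : Fin k → ℝ := (V *ᵥ x) ∘ Sum.inl with hu
        set v : Fin n → ℝ := (V *ᵥ x) ∘ Sum.inr with hv
        have hy : Sum.elim u v = V *ᵥ x := Sum.elim_comp_inl_inr _
        have hqx : x ⬝ᵥ N *ᵥ x = u ⬝ᵥ u - v ⬝ᵥ v := by
          rw [hquadN, ← hy, hquadJ]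
        have huv : v ⬝ᵥ v ≤ u ⬝ᵥ u := by rw [hqx] at hxN; linarith
        have hyne : V *ᵥ x ≠ 0 := by
          intro h0
          apply hx
          have h1 := hV'V x
          rw [h0, mulVec_zero] at h1
          exact h1.symm
        have hune : u ≠ 0 := by
          intro h0
          have hvv : v ⬝ᵥ v ≤ 0 := by
            rw [h0] at huv
            simpa using huv
          have hv0 : v = 0 := by
            by_contra hvne
            linarith [self_dot_pos v hvne]
          apply hyne
          rw [← hy, h0, hv0]
          funext i; cases i <;> rfl
        have hd : 0 < u ⬝ᵥ u := self_dot_pos u hune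
        set W : Matrix (Fin n) (Fin k) ℝ := Matrix.of (fun i j => v i * u j) with hW
        set K0 : Matrix (Fin k ⊕ Fin n) (Fin k) ℝ := fromRows ((u ⬝ᵥ u) • 1) W with hK0
        have hWv : ∀ w : Fin k → ℝ, W *ᵥ w = (u ⬝ᵥ w) • v := by
          intro w
          funext i
          show ∑ j, W i j * w j = ((u ⬝ᵥ w) • v) i
          rw [Pi.smul_apply, smul_eq_mul]
          show ∑ j, (v i * u j) * w j = (∑ j, u j * w j) * v i
          rw [Finset.sum_mul]
          exact Finset.sum_congr rfl fun j _ => by ring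
        have hK0v : ∀ w : Fin k → ℝ, K0 *ᵥ w = Sum.elim ((u ⬝ᵥ u) • w) ((u ⬝ᵥ w) • v) := by
          intro w
          rw [hK0, fromRows_mulVec, smul_mulVec, one_mulVec, hWv]
        have hK0q : ∀ w : Fin k → ℝ, 0 ≤ (K0 *ᵥ w) ⬝ᵥ J *ᵥ (K0 *ᵥ w) := by
          intro w
          rw [hK0v, hquadJ]
          have hsmul : ∀ {κ : Type} [Fintype κ] (c : ℝ) (a : κ → ℝ),
              (c • a) ⬝ᵥ (c • a) = c^2 * (a ⬝ᵥ a) := by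
            intro κ _ c a
            rw [smul_dotProduct, dotProduct_smul, smul_eq_mul, smul_eq_mul]
            ring
          rw [hsmul, hsmul]
          have hcs := Finset.sum_mul_sq_le_sq_mul_sq Finset.univ u w
          have hsq1 : (∑ i, u i ^ 2) = u ⬝ᵥ u := by
            simp [dotProduct, sq]
          have hsq2 : (∑ i, w i ^ 2) = w ⬝ᵥ w := by
            simp [dotProduct, sq]
          have hdot : (∑ i, u i * w i) = u ⬝ᵥ w := rfl
          rw [hsq1, hsq2, hdot] at hcs
          have h1 : (u ⬝ᵥ w)^2 * (v ⬝ᵥ v) ≤ ((u ⬝ᵥ u) * (w ⬝ᵥ w)) * (v ⬝ᵥ v) :=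
            mul_le_mul_of_nonneg_right hcs (self_dot_nonneg v)
          have h2 : ((u ⬝ᵥ u) * (w ⬝ᵥ w)) * (v ⬝ᵥ v) ≤ ((u ⬝ᵥ u) * (w ⬝ᵥ w)) * (u ⬝ᵥ u) :=
            mul_le_mul_of_nonneg_left huv
              (mul_nonneg (self_dot_nonneg u) (self_dot_nonneg w))
          nlinarith [h1, h2]
        set K : Matrix (Fin k ⊕ Fin n) (Fin k) ℝ := V⁻¹ * K0 with hK
        have hVK : V * K = K0 := by
          rw [hK, ← Matrix.mul_assoc, mul_nonsing_inv _ hVdet, Matrix.one_mul]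
        have hKN : ∀ w : Fin k → ℝ, 0 ≤ (K *ᵥ w) ⬝ᵥ N *ᵥ (K *ᵥ w) := by
          intro w
          rw [hquadN]
          have hVKw : V *ᵥ (K *ᵥ w) = K0 *ᵥ w := by
            rw [mulVec_mulVec, hVK]
          rw [hVKw]
          exact hK0q w
        set K1 : Matrix (Fin k) (Fin k) ℝ := Matrix.of (fun i j => K (Sum.inl i) j) with hK1
        set K2 : Matrix (Fin n) (Fin k) ℝ := Matrix.of (fun i j => K (Sum.inr i) j) with hK2
        have hKsplit : K = fromRows K1 K2 := by
          ext i j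
          cases i <;> rfl
        have hK1inj : ∀ c : Fin k → ℝ, K1 *ᵥ c = 0 → c = 0 := by
          intro c hc
          have hKc : K *ᵥ c = Sum.elim (K1 *ᵥ c) (K2 *ᵥ c) := by
            rw [hKsplit, fromRows_mulVec]
          have hq := hKN c
          rw [hKc, hc] at hq
          have hqN2 : (Sum.elim (0 : Fin k → ℝ) (K2 *ᵥ c)) ⬝ᵥ N *ᵥ
              (Sum.elim (0 : Fin k → ℝ) (K2 *ᵥ c)) = (K2 *ᵥ c) ⬝ᵥ N22 *ᵥ (K2 *ᵥ c) := by
            rw [hNdef, quad_fromBlocks]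
            simp
          rw [hqN2] at hq
          have hK2c : K2 *ᵥ c = 0 := by
            by_contra hne
            have hneg := posdef_quad hN22 _ hne
            rw [neg_mulVec, dotProduct_neg] at hneg
            linarith
          have hKc0 : K *ᵥ c = 0 := by
            rw [hKc, hc, hK2c]
            funext i; cases i <;> rfl
          have hK0c : K0 *ᵥ c = 0 := by
            rw [← hVK, ← mulVec_mulVec, hKc0, mulVec_zero]
          rw [hK0v] at hK0c
          funext i
          have h1 : (u ⬝ᵥ u) * c i = 0 := congrFun hK0c (Sum.inl i)
          exact (mul_eq_zero.mp h1).resolve_left hd.ne'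
        have hK1unit : IsUnit K1.det := by
          apply (isUnit_iff_isUnit_det K1).mp
          apply mulVec_injective_iff_isUnit.mp
          intro a b hab
          have h0 : K1 *ᵥ (a - b) = 0 := by rw [mulVec_sub, hab, sub_self]
          exact sub_eq_zero.mp (hK1inj _ h0)
        set Z0 : Matrix (Fin n) (Fin k) ℝ := K2 * K1⁻¹ with hZ0
        have hLK : fromRows (1 : Matrix (Fin k) (Fin k) ℝ) Z0 = K * K1⁻¹ := by
          rw [hKsplit, fromRows_mul, mul_nonsing_inv _ hK1unit]
        have hZNpsd : ((fromRows (1 : Matrix (Fin k) (Fin k) ℝ) Z0)ᵀ * N * fromRows (1 : Matrix (Fin k) (Fin k) ℝ) Z0).PosSemidef := by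
          refine possemidef_of (herm_of_symm (symm_conj hN (fromRows 1 Z0))) ?_
          intro w
          rw [quad_congr, hLK, ← mulVec_mulVec]
          exact hKN _
        have hMpd := H Z0 hZNpsd
        have hxrange : (fromRows 1 Z0) *ᵥ (K1 *ᵥ u) = (u ⬝ᵥ u) • x := by
          have hinner : K1⁻¹ *ᵥ (K1 *ᵥ u) = u := by
            rw [mulVec_mulVec, nonsing_inv_mul _ hK1unit, one_mulVec]
          rw [hLK, ← mulVec_mulVec, hinner]
          have hK0u : K0 *ᵥ u = (u ⬝ᵥ u) • (V *ᵥ x) := by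
            rw [hK0v, ← hy]
            funext i
            cases i <;> rfl
          rw [hK, ← mulVec_mulVec, hK0u, mulVec_smul, hV'V]
        have hw0ne : K1 *ᵥ u ≠ 0 := fun h0 => hune (hK1inj u h0)
        have hval := posdef_quad hMpd (K1 *ᵥ u) hw0ne
        rw [quad_congr, hxrange, quad_smul'] at hval
        nlinarith [hd]
      obtain ⟨α, hα, hineq⟩ := s_lemma_strict N M hslater hvec
      exact ⟨α, hα, posdef_M_sub_smul hM hN α hineq⟩
  · -- backward direction
    rintro ⟨α, hα, hpd⟩ Z hZN
    refine posdef_of (herm_of_symm (symm_conj hM (fromRows 1 Z))) ?_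
    intro x hx
    rw [quad_congr]
    have hLx : (fromRows (1 : Matrix (Fin k) (Fin k) ℝ) Z *ᵥ x) ≠ 0 := by
      intro h0
      apply hx
      have h1 : (fromRows (1 : Matrix (Fin k) (Fin k) ℝ) Z *ᵥ x) ∘ Sum.inl = x := by
        rw [fromRows_mulVec, Sum.elim_comp_inl, one_mulVec]
      rw [h0] at h1
      exact h1.symm
    have h1 := posdef_quad hpd _ hLx
    have h2 := possemidef_quad hZN x
    rw [quad_congr] at h2
    rw [quad_sub_smul] at h1
    nlinarith
end

section
/- Let M, N ∈ ℝ^{(k+n)×(k+n)} be symmetric matrices, partitioned as M = [[M₁₁, M₁₂], [M₁₂ᵀ, M₂₂]] and N = [[N₁₁, N₁₂], [N₁₂ᵀ, N₂₂]] with M₁₁, N₁₁ ∈ ℝ^{k×k} and M₂₂, N₂₂ ∈ ℝ^{n×n}. Assume that M₂₂ is negative semidefinite, N₂₂ is negative semidefinite, ker N₂₂ ⊆ ker N₁₂, the set S_N := { Z ∈ ℝ^{n×k} : [I; Z]ᵀ N [I; Z] positive semidefinite } is nonempty, and [I; Z]ᵀ M [I; Z] is positive definite for all Z ∈ S_N.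 Then ker N₂₂ ⊆ ker M₂₂ and ker N₂₂ ⊆ ker M₁₂; that is, for every matrix Ẑ ∈ ℝ^{n×k} with N₂₂ Ẑ = 0 it holds that M₂₂ Ẑ = 0 and M₁₂ Ẑ = 0. -/
open Matrix

lemma expand_blocks {k n : ℕ} (P : Matrix (Fin k) (Fin k) ℝ) (Q : Matrix (Fin k) (Fin n) ℝ)
    (R : Matrix (Fin n) (Fin n) ℝ) (Z : Matrix (Fin n) (Fin k) ℝ) :
    (fromRows (1 : Matrix (Fin k) (Fin k) ℝ) Z)ᵀ * fromBlocks P Q Qᵀ R * fromRows 1 Z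
      = P + Q * Z + Zᵀ * Qᵀ + Zᵀ * (R * Z) := by
  change (fromRows (1 : Matrix (Fin k) (Fin k) ℝ) Z)ᵀ * fromBlocks P Q Qᵀ R * (fromRows (1 : Matrix (Fin k) (Fin k) ℝ) Z : Matrix (Fin k ⊕ Fin n) (Fin k) ℝ) = _
  rw [transpose_fromRows, Matrix.mul_assoc, fromBlocks_mul_fromRows, fromCols_mul_fromRows]
  simp [Matrix.mul_add, Matrix.mul_assoc, add_assoc]

lemma quad_nonneg (a b c : ℝ) (h : ∀ t : ℝ, 0 < a + t * b + t * t * c) : 0 ≤ c := by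
  by_contra hc
  push_neg at hc
  have ha : 0 < a := by simpa using h 0
  set t := Real.sqrt (a / (-c) + 1) with ht
  have ht2 : t * t = a / (-c) + 1 := by
    have hc' : 0 < -c := by linarith
    exact Real.mul_self_sqrt (by positivity)
  have hc' : c ≠ 0 := by linarith
  have h4 : t * t * c = c - a := by
    have hc2 : -c ≠ 0 := by linarith
    rw [ht2]
    field_simp
    ring
  have h1 := h t
  have h2 := h (-t)
  linarith [h1, h2]

lemma lin_zero (a b : ℝ) (h : ∀ t : ℝ, 0 < a + t * b) : b = 0 := by
  by_contra hb
  have := h ((-(a + 1)) / b)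
  rw [div_mul_cancel₀ _ hb] at this
  linarith

/-- Kernel inclusions established in the proof of Theorem 6 of
van Waarde–Camlibel–Mesbahi: `ker N₂₂ ⊆ ker M₂₂` and `ker N₂₂ ⊆ ker M₁₂`. -/
theorem kernel_inclusions {k n : ℕ}
    (M11 N11 : Matrix (Fin k) (Fin k) ℝ) (M12 N12 : Matrix (Fin k) (Fin n) ℝ)
    (M22 N22 : Matrix (Fin n) (Fin n) ℝ)
    (M N : Matrix (Fin k ⊕ Fin n) (Fin k ⊕ Fin n) ℝ)
    (hMdef : M = fromBlocks M11 M12 M12ᵀ M22)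
    (hNdef : N = fromBlocks N11 N12 N12ᵀ N22)
    (hM : M.IsSymm) (hN : N.IsSymm)
    (hM22 : (-M22).PosSemidef) (hN22 : (-N22).PosSemidef)
    (hker : ∀ x : Fin n → ℝ, N22.mulVec x = 0 → N12.mulVec x = 0)
    (hne : ∃ Z : Matrix (Fin n) (Fin k) ℝ, ((fromRows (1 : Matrix (Fin k) (Fin k) ℝ) Z)ᵀ * N * fromRows 1 Z).PosSemidef)
    (hPD : ∀ Z : Matrix (Fin n) (Fin k) ℝ, ((fromRows (1 : Matrix (Fin k) (Fin k) ℝ) Z)ᵀ * N * fromRows 1 Z).PosSemidef →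
      ((fromRows (1 : Matrix (Fin k) (Fin k) ℝ) Z)ᵀ * M * fromRows 1 Z).PosDef) :
    ∀ Zhat : Matrix (Fin n) (Fin k) ℝ, N22 * Zhat = 0 → M22 * Zhat = 0 ∧ M12 * Zhat = 0 := by
  intro Zhat hZ
  obtain ⟨Z0, hZ0⟩ := hne
  have hM22s : M22ᵀ = M22 := by
    have h := hM22.1
    rw [Matrix.IsHermitian, conjTranspose_eq_transpose_of_trivial, transpose_neg] at h
    simpa using congrArg Neg.neg h
  have hN22s : N22ᵀ = N22 := by
    have h := hN22.1
    rw [Matrix.IsHermitian, conjTranspose_eq_transpose_of_trivial, transpose_neg] at h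
    simpa using congrArg Neg.neg h
  -- N12 * Zhat = 0
  have hN12Z : N12 * Zhat = 0 := by
    ext i c
    have hcol : N22 *ᵥ (fun j => Zhat j c) = 0 := by
      funext i'
      simpa [Matrix.mulVec, dotProduct, Matrix.mul_apply] using
        congrFun (congrFun hZ i') c
    simpa [Matrix.mul_apply, Matrix.mulVec, dotProduct] using congrFun (hker _ hcol) i
  have hZt : Zhatᵀ * N22 = 0 := by
    have h := congrArg Matrix.transpose hZ
    rw [transpose_mul, hN22s] at h
    simpa using h
  have hN12t : Zhatᵀ * N12ᵀ = 0 := by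
    have h := congrArg Matrix.transpose hN12Z
    rw [transpose_mul] at h
    simpa using h
  have hZW : ∀ X : Matrix (Fin k) (Fin k) ℝ, N22 * (Zhat * X) = 0 := fun X => by
    rw [← Matrix.mul_assoc, hZ, Matrix.zero_mul]
  have hN12W : ∀ X : Matrix (Fin k) (Fin k) ℝ, N12 * (Zhat * X) = 0 := fun X => by
    rw [← Matrix.mul_assoc, hN12Z, Matrix.zero_mul]
  have hZt' : ∀ X : Matrix (Fin n) (Fin k) ℝ, Zhatᵀ * (N22 * X) = 0 := fun X => by
    rw [← Matrix.mul_assoc, hZt, Matrix.zero_mul]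
  have key : ∀ W : Matrix (Fin k) (Fin k) ℝ,
      ((fromRows (1 : Matrix (Fin k) (Fin k) ℝ) (Z0 + Zhat * W))ᵀ * N * fromRows 1 (Z0 + Zhat * W) : Matrix (Fin k) (Fin k) ℝ)
        = (fromRows (1 : Matrix (Fin k) (Fin k) ℝ) Z0)ᵀ * N * fromRows 1 Z0 := by
    intro W
    rw [hNdef, expand_blocks, expand_blocks]
    simp [Matrix.mul_add, Matrix.add_mul, Matrix.mul_assoc, transpose_add, transpose_mul,
      hZW, hN12W, hZt', hN12t]
  have hPDW : ∀ W : Matrix (Fin k) (Fin k) ℝ,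
      ((fromRows (1 : Matrix (Fin k) (Fin k) ℝ) (Z0 + Zhat * W))ᵀ * M * fromRows 1 (Z0 + Zhat * W)).PosDef :=
    fun W => hPD _ (by have h := congrArg Matrix.PosSemidef (key W); exact h.mpr hZ0)
  set A := M11 + M12 * Z0 + Z0ᵀ * M12ᵀ + Z0ᵀ * (M22 * Z0) with hA
  set S := M12 * Zhat + Z0ᵀ * (M22 * Zhat) with hS
  set C := Zhatᵀ * (M22 * Zhat) with hC
  have hMexp : ∀ W : Matrix (Fin k) (Fin k) ℝ,
      ((fromRows (1 : Matrix (Fin k) (Fin k) ℝ) (Z0 + Zhat * W))ᵀ * M * fromRows 1 (Z0 + Zhat * W) : Matrix (Fin k) (Fin k) ℝ)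
        = A + (S * W + (S * W)ᵀ) + Wᵀ * (C * W) := by
    intro W
    rw [hMdef, expand_blocks, hA, hS, hC]
    simp only [Matrix.mul_add, Matrix.add_mul, Matrix.mul_assoc, transpose_add, transpose_mul,
      transpose_transpose, hM22s]
    abel
  have hPD' : ∀ W : Matrix (Fin k) (Fin k) ℝ,
      (A + (S * W + (S * W)ᵀ) + Wᵀ * (C * W)).PosDef :=
    fun W => hMexp W ▸ hPDW W
  -- Step 1 : M22 * Zhat = 0
  have hM22Zv : ∀ x : Fin k → ℝ, (-M22) *ᵥ (Zhat *ᵥ x) = 0 := by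
    intro x
    by_cases hx : x = 0
    · simp [hx]
    · have hq : ∀ t : ℝ, 0 < (x ⬝ᵥ A *ᵥ x)
          + t * (x ⬝ᵥ S *ᵥ x + x ⬝ᵥ Sᵀ *ᵥ x) + t * t * (x ⬝ᵥ C *ᵥ x) := by
        intro t
        have h := (hPD' (t • (1 : Matrix (Fin k) (Fin k) ℝ))).dotProduct_mulVec_pos hx
        simp only [Matrix.mul_smul, Matrix.smul_mul, Matrix.mul_one, Matrix.one_mul,
          transpose_smul, transpose_one, smul_smul, add_mulVec, Matrix.smul_mulVec,
          dotProduct_add, dotProduct_smul, star_trivial, smul_eq_mul] at h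
        ring_nf at h ⊢
        linarith [h]
      have hcge : 0 ≤ x ⬝ᵥ C *ᵥ x := quad_nonneg _ _ _ hq
      have hid : x ⬝ᵥ C *ᵥ x = - ((Zhat *ᵥ x) ⬝ᵥ ((-M22) *ᵥ (Zhat *ᵥ x))) := by
        rw [hC, ← Matrix.mulVec_mulVec, ← Matrix.mulVec_mulVec,
          Matrix.dotProduct_mulVec, Matrix.vecMul_transpose, neg_mulVec, dotProduct_neg]
        ring_nf
      have h0 : (Zhat *ᵥ x) ⬝ᵥ ((-M22) *ᵥ (Zhat *ᵥ x)) = 0 := by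
        have hle := hM22.dotProduct_mulVec_nonneg (Zhat *ᵥ x)
        rw [star_trivial] at hle
        linarith [hid ▸ hcge]
      exact (hM22.dotProduct_mulVec_zero_iff (Zhat *ᵥ x)).mp (by rw [star_trivial]; exact h0)
  have hM22Z : M22 * Zhat = 0 := by
    ext i c
    have h2 := congrFun (hM22Zv (Pi.single c 1)) i
    rw [neg_mulVec] at h2
    simp only [Matrix.mulVec_single, mul_one, Pi.neg_apply, Pi.zero_apply, neg_eq_zero] at h2
    simpa [Matrix.mul_apply, Matrix.mulVec, dotProduct] using h2
  -- Step 2 : M12 * Zhat = 0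
  have hC0 : C = 0 := by rw [hC, hM22Z, Matrix.mul_zero]
  have hS' : S = M12 * Zhat := by rw [hS, hM22Z, Matrix.mul_zero, add_zero]
  have hSv : ∀ x : Fin k → ℝ, (M12 * Zhat)ᵀ *ᵥ x = 0 := by
    intro x
    by_cases hx : x = 0
    · simp [hx]
    · have hq : ∀ t : ℝ, 0 < (x ⬝ᵥ A *ᵥ x)
          + t * (-(2 * (((M12 * Zhat)ᵀ *ᵥ x) ⬝ᵥ ((M12 * Zhat)ᵀ *ᵥ x)))) := by
        intro t
        have h := (hPD' ((-t) • (M12 * Zhat)ᵀ)).dotProduct_mulVec_pos hx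
        rw [hS', hC0] at h
        simp only [Matrix.mul_smul, Matrix.smul_mul, Matrix.zero_mul, Matrix.mul_zero,
          transpose_smul, transpose_mul, transpose_transpose,
          add_mulVec, Matrix.smul_mulVec, Matrix.zero_mulVec, dotProduct_zero,
          dotProduct_add, dotProduct_smul, star_trivial, smul_eq_mul, mul_zero, add_zero] at h
        have h5 : x ⬝ᵥ (M12 * Zhat * (Zhatᵀ * M12ᵀ)) *ᵥ x
            = ((M12 * Zhat)ᵀ *ᵥ x) ⬝ᵥ ((M12 * Zhat)ᵀ *ᵥ x) := by
          rw [← transpose_mul, ← Matrix.mulVec_mulVec, Matrix.dotProduct_mulVec,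
            ← Matrix.mulVec_transpose]
        rw [h5] at h
        ring_nf at h ⊢
        linarith [h]
      have hb := lin_zero _ _ hq
      have : ((M12 * Zhat)ᵀ *ᵥ x) ⬝ᵥ ((M12 * Zhat)ᵀ *ᵥ x) = 0 := by linarith
      exact dotProduct_self_eq_zero.mp this
  have hM12Z : M12 * Zhat = 0 := by
    ext i c
    have h2 := congrFun (hSv (Pi.single i 1)) c
    simp only [Matrix.mulVec_single, mul_one, Matrix.transpose_apply, Pi.zero_apply] at h2
    simpa [-transpose_mul] using h2
  exact ⟨hM22Z, hM12Z⟩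
end

section
/- Let M, N ∈ ℝ^{(k+n)×(k+n)} be symmetric matrices, partitioned as M = [[M₁₁, M₁₂], [M₁₂ᵀ, M₂₂]] and N = [[N₁₁, N₁₂], [N₁₂ᵀ, N₂₂]] with M₁₁, N₁₁ ∈ ℝ^{k×k}. Assume M₂₂ negative semidefinite, N₂₂ negative semidefinite, ker N₂₂ ⊆ ker N₁₂, ker N₂₂ ⊆ ker M₂₂, ker N₂₂ ⊆ ker M₁₂, and that [I; Z]ᵀ M [I; Z] is positive definite for all Z in S_N := { Z ∈ ℝ^{n×k} : [I; Z]ᵀ N [I; Z] positive semidefinite }. Then there exists β > 0 such that [I; Z]ᵀ (M − [[βI, 0], [0, 0]]) [I; Z] is positive definite for all Z ∈ S_N, where βI is the k×k identity scaled by β. -/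
open Matrix

variable {k n : ℕ}

/-- quadratic form abbreviation -/
noncomputable def qf (A11 : Matrix (Fin k) (Fin k) ℝ) (A12 : Matrix (Fin k) (Fin n) ℝ)
    (A22 : Matrix (Fin n) (Fin n) ℝ) (Z : Matrix (Fin n) (Fin k) ℝ) :
    Matrix (Fin k) (Fin k) ℝ :=
  A11 + A12 * Z + (Zᵀ * A12ᵀ + Zᵀ * (A22 * Z))

lemma quadExpand (A11 : Matrix (Fin k) (Fin k) ℝ) (A12 : Matrix (Fin k) (Fin n) ℝ)
    (A22 : Matrix (Fin n) (Fin n) ℝ) (Z : Matrix (Fin n) (Fin k) ℝ) :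
    (fromRows (1 : Matrix (Fin k) (Fin k) ℝ) Z)ᵀ * fromBlocks A11 A12 A12ᵀ A22 * fromRows 1 Z = qf A11 A12 A22 Z := by
  change ((fromRows (1 : Matrix (Fin k) (Fin k) ℝ) Z)ᵀ * fromBlocks A11 A12 A12ᵀ A22 :
    Matrix (Fin k) (Fin k ⊕ Fin n) ℝ) * (fromRows (1 : Matrix (Fin k) (Fin k) ℝ) Z :
    Matrix (Fin k ⊕ Fin n) (Fin k) ℝ) = _
  rw [transpose_fromRows, Matrix.mul_assoc, fromBlocks_mul_fromRows, fromCols_mul_fromRows]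
  simp [qf, Matrix.add_mul, Matrix.mul_add, Matrix.mul_assoc]

lemma qf_apply (A11 : Matrix (Fin k) (Fin k) ℝ) (A12 : Matrix (Fin k) (Fin n) ℝ)
    (A22 : Matrix (Fin n) (Fin n) ℝ) (Z : Matrix (Fin n) (Fin k) ℝ) (i j : Fin k) :
    qf A11 A12 A22 Z i j = A11 i j + (A12 *ᵥ (fun l => Z l j)) i
      + ((A12 *ᵥ (fun l => Z l i)) j + (fun l => Z l i) ⬝ᵥ (A22 *ᵥ (fun l => Z l j))) := by
  simp only [qf, Matrix.add_apply, Matrix.mul_apply, Matrix.transpose_apply, mulVec, dotProduct]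
  congr 1
  congr 1
  exact Finset.sum_congr rfl fun l _ => mul_comm _ _

lemma qf_eq_of_cols (A11 : Matrix (Fin k) (Fin k) ℝ) (A12 : Matrix (Fin k) (Fin n) ℝ)
    (A22 : Matrix (Fin n) (Fin n) ℝ) (hsym : A22ᵀ = A22)
    (Z W : Matrix (Fin n) (Fin k) ℝ)
    (h12 : ∀ j, A12 *ᵥ (fun l => Z l j) = A12 *ᵥ (fun l => W l j))
    (h22 : ∀ j, A22 *ᵥ (fun l => Z l j) = A22 *ᵥ (fun l => W l j)) :
    qf A11 A12 A22 Z = qf A11 A12 A22 W := by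
  ext i j
  rw [qf_apply, qf_apply, h12 j, h12 i]
  congr 1
  congr 1
  calc (fun l => Z l i) ⬝ᵥ (A22 *ᵥ fun l => Z l j)
      = (fun l => Z l i) ⬝ᵥ (A22 *ᵥ fun l => W l j) := by rw [h22 j]
    _ = (A22 *ᵥ fun l => Z l i) ⬝ᵥ (fun l => W l j) := by
        rw [Matrix.dotProduct_mulVec, ← Matrix.mulVec_transpose, hsym]
    _ = (A22 *ᵥ fun l => W l i) ⬝ᵥ (fun l => W l j) := by rw [h22 i]
    _ = (fun l => W l i) ⬝ᵥ (A22 *ᵥ fun l => W l j) := by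
        rw [Matrix.dotProduct_mulVec, ← Matrix.mulVec_transpose, hsym]

lemma dp_self_nonneg {m : ℕ} (v : Fin m → ℝ) : 0 ≤ v ⬝ᵥ v :=
  Finset.sum_nonneg fun i _ => mul_self_nonneg _

lemma abs_entry_le_sqrt {m : ℕ} (v : Fin m → ℝ) (i : Fin m) : |v i| ≤ Real.sqrt (v ⬝ᵥ v) := by
  rw [← Real.sqrt_mul_self_eq_abs]
  exact Real.sqrt_le_sqrt (Finset.single_le_sum (f := fun l => v l * v l)
    (fun l _ => mul_self_nonneg _) (Finset.mem_univ i))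

/-- compactness of a box -/
lemma isCompact_box {m : ℕ} (R : ℝ) :
    IsCompact {v : Fin m → ℝ | ∀ i, v i ∈ Set.Icc (-R) R} := by
  have : {v : Fin m → ℝ | ∀ i, v i ∈ Set.Icc (-R) R}
      = Set.pi Set.univ (fun _ : Fin m => Set.Icc (-R) R) := by
    ext v; simp only [Set.mem_setOf_eq, Set.mem_univ_pi]
  rw [this]
  exact isCompact_univ_pi fun _ => isCompact_Icc

lemma isCompact_mbox {m l : ℕ} (R : ℝ) :
    IsCompact {W : Matrix (Fin m) (Fin l) ℝ | ∀ i j, W i j ∈ Set.Icc (-R) R} := by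
  have : {W : Matrix (Fin m) (Fin l) ℝ | ∀ i j, W i j ∈ Set.Icc (-R) R}
      = Set.pi Set.univ (fun _ : Fin m => {v : Fin l → ℝ | ∀ j, v j ∈ Set.Icc (-R) R}) := by
    ext W
    exact Iff.intro (fun h i _ => h i) (fun h i j => h i (Set.mem_univ i) j)
  rw [this]
  exact isCompact_univ_pi fun _ => isCompact_box R

/-- positive lower bound of a PSD quadratic form on the range of the matrix -/
lemma exists_pos_lower {m : ℕ} (B : Matrix (Fin m) (Fin m) ℝ) (hB : B.PosSemidef)
    (hsym : Bᵀ = B) :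
    ∃ c : ℝ, 0 < c ∧ ∀ w ∈ LinearMap.range B.mulVecLin, c * (w ⬝ᵥ w) ≤ w ⬝ᵥ B *ᵥ w := by
  classical
  set Kr : Submodule ℝ (Fin m → ℝ) := LinearMap.range B.mulVecLin with hKr
  set T : Set (Fin m → ℝ) :=
    {w | w ∈ Kr ∧ w ⬝ᵥ w = 1 ∧ ∀ i, w i ∈ Set.Icc (-1:ℝ) 1} with hT
  have hTcl : IsClosed T := by
    have h1 : IsClosed {w : Fin m → ℝ | w ∈ Kr} := Kr.closed_of_finiteDimensional
    have h2 : IsClosed {w : Fin m → ℝ | w ⬝ᵥ w = 1} :=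
      isClosed_eq (continuous_id.dotProduct continuous_id) continuous_const
    have h3 : IsClosed {w : Fin m → ℝ | ∀ i, w i ∈ Set.Icc (-1:ℝ) 1} := by
      rw [Set.setOf_forall]
      exact isClosed_iInter fun i => isClosed_Icc.preimage (continuous_apply i)
    exact h1.inter (h2.inter h3)
  have hTcp : IsCompact T := by
    refine (isCompact_box (m := m) 1).of_isClosed_subset hTcl ?_
    intro w hw
    exact hw.2.2
  -- scaled membership
  have hscale : ∀ w ∈ Kr, w ≠ 0 → (Real.sqrt (w ⬝ᵥ w))⁻¹ • w ∈ T := by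
    intro w hw hw0
    have hpos : 0 < w ⬝ᵥ w :=
      lt_of_le_of_ne (dp_self_nonneg w) (fun h => hw0 (dotProduct_self_eq_zero.mp h.symm))
    have hs : Real.sqrt (w ⬝ᵥ w) > 0 := Real.sqrt_pos.mpr hpos
    have hdot : ((Real.sqrt (w ⬝ᵥ w))⁻¹ • w) ⬝ᵥ ((Real.sqrt (w ⬝ᵥ w))⁻¹ • w) = 1 := by
      rw [smul_dotProduct, dotProduct_smul, smul_eq_mul, smul_eq_mul,
        ← mul_assoc]
      rw [← mul_inv, Real.mul_self_sqrt hpos.le]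
      exact inv_mul_cancel₀ hpos.ne'
    refine ⟨Kr.smul_mem _ hw, hdot, fun i => ?_⟩
    have := abs_entry_le_sqrt ((Real.sqrt (w ⬝ᵥ w))⁻¹ • w) i
    rw [hdot, Real.sqrt_one] at this
    exact ⟨neg_le_of_abs_le this, le_of_abs_le this⟩
  by_cases hne : T.Nonempty
  · obtain ⟨w₀, hw₀T, hmin'⟩ := hTcp.exists_isMinOn hne
      ((continuous_id.dotProduct (continuous_const.matrix_mulVec continuous_id)).continuousOn)
    have hmin : ∀ w ∈ T, w₀ ⬝ᵥ B *ᵥ w₀ ≤ w ⬝ᵥ B *ᵥ w := fun w hw => hmin' hw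
    refine ⟨w₀ ⬝ᵥ B *ᵥ w₀, ?_, ?_⟩
    · rcases lt_or_eq_of_le (by simpa using hB.dotProduct_mulVec_nonneg w₀) with h | h
      · exact h
      · exfalso
        have hker : B *ᵥ w₀ = 0 := (hB.dotProduct_mulVec_zero_iff w₀).mp (by simpa using h.symm)
        obtain ⟨u, hu⟩ := hw₀T.1
        have : w₀ ⬝ᵥ w₀ = 0 := by
          calc w₀ ⬝ᵥ w₀ = w₀ ⬝ᵥ (B *ᵥ u) := by rw [show B *ᵥ u = w₀ from hu]
            _ = (Bᵀ *ᵥ w₀) ⬝ᵥ u := by rw [Matrix.dotProduct_mulVec, Matrix.mulVec_transpose]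
            _ = 0 := by rw [hsym, hker]; simp
        rw [hw₀T.2.1] at this
        exact one_ne_zero this
    · intro w hw
      rcases eq_or_ne w 0 with rfl | hw0
      · simp
      · have hmem := hscale w hw hw0
        have := hmin _ hmem
        have hpos : 0 < w ⬝ᵥ w :=
          lt_of_le_of_ne (dp_self_nonneg w) (fun h => hw0 (dotProduct_self_eq_zero.mp h.symm))
        have hs : (0:ℝ) < Real.sqrt (w ⬝ᵥ w) := Real.sqrt_pos.mpr hpos
        rw [smul_dotProduct, Matrix.mulVec_smul, dotProduct_smul] at this
        have hsq : Real.sqrt (w ⬝ᵥ w) * Real.sqrt (w ⬝ᵥ w) = w ⬝ᵥ w := Real.mul_self_sqrt hpos.le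
        have h2 : w₀ ⬝ᵥ B *ᵥ w₀ * (w ⬝ᵥ w) ≤ w ⬝ᵥ B *ᵥ w := by
          have := mul_le_mul_of_nonneg_left this (le_of_lt (mul_pos hs hs))
          calc w₀ ⬝ᵥ B *ᵥ w₀ * (w ⬝ᵥ w)
              = Real.sqrt (w ⬝ᵥ w) * Real.sqrt (w ⬝ᵥ w) * (w₀ ⬝ᵥ B *ᵥ w₀) := by rw [hsq]; ring
            _ ≤ Real.sqrt (w ⬝ᵥ w) * Real.sqrt (w ⬝ᵥ w) *
                ((Real.sqrt (w ⬝ᵥ w))⁻¹ • ((Real.sqrt (w ⬝ᵥ w))⁻¹ • (w ⬝ᵥ B *ᵥ w))) := this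
            _ = w ⬝ᵥ B *ᵥ w := by
                rw [smul_eq_mul, smul_eq_mul]
                field_simp
        linarith [h2]
  · refine ⟨1, one_pos, fun w hw => ?_⟩
    rcases eq_or_ne w 0 with rfl | hw0
    · simp
    · exact absurd ⟨_, hscale w hw hw0⟩ hne

/-- Uniform strictness in the (1,1)-block over `S_N` (claim in the proof of Theorem 6 of
van Waarde–Camlibel–Mesbahi). -/
theorem uniform_strictness_block {k n : ℕ}
    (M11 N11 : Matrix (Fin k) (Fin k) ℝ) (M12 N12 : Matrix (Fin k) (Fin n) ℝ)
    (M22 N22 : Matrix (Fin n) (Fin n) ℝ)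
    (M N : Matrix (Fin k ⊕ Fin n) (Fin k ⊕ Fin n) ℝ)
    (hMdef : M = fromBlocks M11 M12 M12ᵀ M22)
    (hNdef : N = fromBlocks N11 N12 N12ᵀ N22)
    (hM22 : (-M22).PosSemidef) (hN22 : (-N22).PosSemidef)
    (hkerN12 : ∀ x : Fin n → ℝ, N22.mulVec x = 0 → N12.mulVec x = 0)
    (hkerM22 : ∀ x : Fin n → ℝ, N22.mulVec x = 0 → M22.mulVec x = 0)
    (hkerM12 : ∀ x : Fin n → ℝ, N22.mulVec x = 0 → M12.mulVec x = 0)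
    (hPD : ∀ Z : Matrix (Fin n) (Fin k) ℝ, ((fromRows (1 : Matrix (Fin k) (Fin k) ℝ) Z)ᵀ * N * fromRows 1 Z).PosSemidef →
      ((fromRows (1 : Matrix (Fin k) (Fin k) ℝ) Z)ᵀ * M * fromRows 1 Z).PosDef) :
    ∃ β : ℝ, 0 < β ∧ ∀ Z : Matrix (Fin n) (Fin k) ℝ,
      ((fromRows (1 : Matrix (Fin k) (Fin k) ℝ) Z)ᵀ * N * fromRows 1 Z).PosSemidef →
      ((fromRows (1 : Matrix (Fin k) (Fin k) ℝ) Z)ᵀ * (M - fromBlocks (β • 1) 0 0 0) * fromRows 1 Z).PosDef := by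
  classical
  subst hMdef hNdef
  -- symmetry of the 22 blocks
  have hN22sym : N22ᵀ = N22 := by
    have h := hN22.1
    rw [Matrix.IsHermitian, conjTranspose_eq_transpose_of_trivial, transpose_neg] at h
    exact neg_injective h
  have hM22sym : M22ᵀ = M22 := by
    have h := hM22.1
    rw [Matrix.IsHermitian, conjTranspose_eq_transpose_of_trivial, transpose_neg] at h
    exact neg_injective h
  set B : Matrix (Fin n) (Fin n) ℝ := -N22 with hB
  have hBsym : Bᵀ = B := by rw [hB, transpose_neg, hN22sym]
  -- hypotheses via B
  have hkerB : ∀ x : Fin n → ℝ, B *ᵥ x = 0 → N22 *ᵥ x = 0 := by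
    intro x hx
    have : -(N22 *ᵥ x) = 0 := by rw [← Matrix.neg_mulVec]; exact hx
    exact neg_eq_zero.mp this
  -- range and kernel submodules
  set Kr : Submodule ℝ (Fin n → ℝ) := LinearMap.range B.mulVecLin with hKr
  set Kk : Submodule ℝ (Fin n → ℝ) := LinearMap.ker B.mulVecLin with hKk
  have hdis : Disjoint Kr Kk := by
    rw [Submodule.disjoint_def]
    intro x hx1 hx2
    obtain ⟨u, hu⟩ := hx1
    have hx2' : B *ᵥ x = 0 := hx2
    have : x ⬝ᵥ x = 0 := by
      calc x ⬝ᵥ x = x ⬝ᵥ (B *ᵥ u) := by rw [show B *ᵥ u = x from hu]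
        _ = (Bᵀ *ᵥ x) ⬝ᵥ u := by rw [Matrix.dotProduct_mulVec, Matrix.mulVec_transpose]
        _ = 0 := by rw [hBsym, hx2']; simp
    exact dotProduct_self_eq_zero.mp this
  have hcodis : Kr ⊔ Kk = ⊤ := by
    apply Submodule.eq_top_of_finrank_eq
    have h1 := LinearMap.finrank_range_add_finrank_ker B.mulVecLin
    have h2 := Submodule.finrank_sup_add_finrank_inf_eq Kr Kk
    rw [hdis.eq_bot] at h2
    simp only [finrank_bot, add_zero] at h2
    rw [h2, h1, Module.finrank_fin_fun]
  -- decomposition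
  have hdecomp : ∀ v : Fin n → ℝ, ∃ w, w ∈ Kr ∧ B *ᵥ (v - w) = 0 := by
    intro v
    have hv : v ∈ Kr ⊔ Kk := by rw [hcodis]; trivial
    rw [Submodule.mem_sup] at hv
    obtain ⟨y, hy, z, hz, hyz⟩ := hv
    refine ⟨y, hy, ?_⟩
    have : v - y = z := by rw [← hyz]; ring
    rw [this]
    exact hz
  choose pr hpr1 hpr2 using hdecomp
  -- the lower bound constant
  obtain ⟨c, hc, hclow⟩ := exists_pos_lower B (by rw [hB]; exact hN22) hBsym
  -- constants
  set a : ℝ := 1 + ∑ j : Fin k, |N11 j j| with ha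
  set C : ℝ := 1 + ∑ j : Fin k, ∑ l : Fin n, |N12 j l| with hC
  have hapos : 0 < a := by positivity
  have hCpos : 0 < C := by positivity
  set R : ℝ := max 1 ((a + 2*C)/c) with hR
  -- diag of PSD matrices
  have psd_diag : ∀ (A : Matrix (Fin k) (Fin k) ℝ), A.PosSemidef → ∀ i, 0 ≤ A i i := by
    intro A hA i
    have := hA.dotProduct_mulVec_nonneg (Pi.single i 1)
    simpa using this
  -- key step : bounded representative with the same quadratic forms
  have key : ∀ Z : Matrix (Fin n) (Fin k) ℝ, (qf N11 N12 N22 Z).PosSemidef →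
      ∃ W : Matrix (Fin n) (Fin k) ℝ,
        (∀ i j, W i j ∈ Set.Icc (-R) R) ∧ qf N11 N12 N22 W = qf N11 N12 N22 Z ∧
          qf M11 M12 M22 W = qf M11 M12 M22 Z := by
    intro Z hZ
    set W : Matrix (Fin n) (Fin k) ℝ := Matrix.of (fun i j => pr (fun l => Z l j) i) with hW
    have hcolW : ∀ j, (fun l => W l j) = pr (fun l => Z l j) := fun j => rfl
    have hker : ∀ j, N22 *ᵥ ((fun l => Z l j) - pr (fun l => Z l j)) = 0 :=
      fun j => hkerB _ (hpr2 _)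
    have hN22c : ∀ j, N22 *ᵥ (fun l => Z l j) = N22 *ᵥ (fun l => W l j) := by
      intro j
      rw [hcolW]
      have h0 := hker j
      rwa [Matrix.mulVec_sub, sub_eq_zero] at h0
    have hN12c : ∀ j, N12 *ᵥ (fun l => Z l j) = N12 *ᵥ (fun l => W l j) := by
      intro j
      rw [hcolW]
      have h0 := hkerN12 _ (hker j)
      rwa [Matrix.mulVec_sub, sub_eq_zero] at h0
    have hM22c : ∀ j, M22 *ᵥ (fun l => Z l j) = M22 *ᵥ (fun l => W l j) := by
      intro j
      rw [hcolW]
      have h0 := hkerM22 _ (hker j)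
      rwa [Matrix.mulVec_sub, sub_eq_zero] at h0
    have hM12c : ∀ j, M12 *ᵥ (fun l => Z l j) = M12 *ᵥ (fun l => W l j) := by
      intro j
      rw [hcolW]
      have h0 := hkerM12 _ (hker j)
      rwa [Matrix.mulVec_sub, sub_eq_zero] at h0
    have hqfN : qf N11 N12 N22 W = qf N11 N12 N22 Z :=
      (qf_eq_of_cols N11 N12 N22 hN22sym Z W hN12c hN22c).symm
    have hqfM : qf M11 M12 M22 W = qf M11 M12 M22 Z :=
      (qf_eq_of_cols M11 M12 M22 hM22sym Z W hM12c hM22c).symm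
    refine ⟨W, ?_, hqfN, hqfM⟩
    intro i j
    set w : Fin n → ℝ := fun l => W l j with hw
    have hwKr : w ∈ Kr := hpr1 _
    set t : ℝ := Real.sqrt (w ⬝ᵥ w) with hts
    have ht0 : 0 ≤ t := Real.sqrt_nonneg _
    have htt : t * t = w ⬝ᵥ w := Real.mul_self_sqrt (dp_self_nonneg w)
    -- diagonal inequality
    have hdiag : 0 ≤ (qf N11 N12 N22 W) j j := psd_diag _ (hqfN ▸ hZ) j
    rw [qf_apply] at hdiag
    -- identify N22 part with -B
    have hBneg : w ⬝ᵥ (N22 *ᵥ w) = -(w ⬝ᵥ B *ᵥ w) := by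
      rw [hB, Matrix.neg_mulVec, dotProduct_neg, neg_neg]
    -- entry bounds
    have hN11b : N11 j j ≤ a := by
      rw [ha]
      have h1 : |N11 j j| ≤ ∑ j' : Fin k, |N11 j' j'| :=
        Finset.single_le_sum (f := fun j' => |N11 j' j'|) (fun _ _ => abs_nonneg _)
          (Finset.mem_univ j)
      have := le_abs_self (N11 j j)
      linarith
    have hwentry : ∀ l, |w l| ≤ t := fun l => abs_entry_le_sqrt w l
    have hN12b : (N12 *ᵥ w) j ≤ C * t := by
      have h1 : (N12 *ᵥ w) j ≤ ∑ l : Fin n, |N12 j l| * t := by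
        refine le_trans (le_abs_self _) ?_
        simp only [Matrix.mulVec, dotProduct]
        refine le_trans (Finset.abs_sum_le_sum_abs _ _) ?_
        refine Finset.sum_le_sum fun l _ => ?_
        rw [abs_mul]
        exact mul_le_mul_of_nonneg_left (hwentry l) (abs_nonneg _)
      rw [← Finset.sum_mul] at h1
      refine le_trans h1 (mul_le_mul_of_nonneg_right ?_ ht0)
      rw [hC]
      have h2 : (∑ l : Fin n, |N12 j l|) ≤ ∑ j' : Fin k, ∑ l : Fin n, |N12 j' l| :=
        Finset.single_le_sum (f := fun j' => ∑ l : Fin n, |N12 j' l|)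
          (fun _ _ => Finset.sum_nonneg fun _ _ => abs_nonneg _) (Finset.mem_univ j)
      linarith
    have hct : c * (t * t) ≤ a + 2 * (C * t) := by
      rw [htt]
      have h1 := hclow w hwKr
      -- 0 ≤ N11 j j + (N12 w) j + ((N12 w) j + w ⬝ᵥ N22 w)
      rw [hBneg] at hdiag
      linarith
    have htR : t ≤ R := by
      rcases le_or_gt t 1 with h | h
      · exact le_trans h (le_max_left _ _)
      · rw [hR]
        refine le_trans ?_ (le_max_right _ _)
        rw [le_div_iff₀ hc]
        have h2 : c * t * t ≤ (a + 2*C) * t := by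
          have ha' : a ≤ a * t := le_mul_of_one_le_right hapos.le h.le
          nlinarith
        have := le_of_mul_le_mul_right (by linarith : (c * t) * t ≤ (a + 2*C) * t)
          (lt_trans one_pos h)
        linarith
    have := le_trans (hwentry i) htR
    exact ⟨neg_le_of_abs_le this, le_of_abs_le this⟩
  -- the compact search set
  set SS : Set (Matrix (Fin n) (Fin k) ℝ × (Fin k → ℝ)) :=
    {p | (∀ i j, p.1 i j ∈ Set.Icc (-R) R) ∧ (qf N11 N12 N22 p.1).PosSemidef ∧
         ((∀ j, p.2 j ∈ Set.Icc (-1:ℝ) 1) ∧ p.2 ⬝ᵥ p.2 = 1)} with hSSdef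
  -- continuity of the quadratic forms
  have hqcont : ∀ (A11 : Matrix (Fin k) (Fin k) ℝ) (A12 : Matrix (Fin k) (Fin n) ℝ)
      (A22 : Matrix (Fin n) (Fin n) ℝ),
      Continuous (fun p : Matrix (Fin n) (Fin k) ℝ × (Fin k → ℝ) => qf A11 A12 A22 p.1) := by
    intro A11 A12 A22
    have h1 : Continuous (fun p : Matrix (Fin n) (Fin k) ℝ × (Fin k → ℝ) => p.1) :=
      continuous_fst
    exact ((continuous_const.add (continuous_const.matrix_mul h1)).add
      ((h1.matrix_transpose.matrix_mul continuous_const).add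
        (h1.matrix_transpose.matrix_mul (continuous_const.matrix_mul h1))))
  have hSScl : IsClosed SS := by
    have h1 : IsClosed {p : Matrix (Fin n) (Fin k) ℝ × (Fin k → ℝ) |
        ∀ i j, p.1 i j ∈ Set.Icc (-R) R} := by
      have heq : {p : Matrix (Fin n) (Fin k) ℝ × (Fin k → ℝ) |
          ∀ i j, p.1 i j ∈ Set.Icc (-R) R}
          = ⋂ i, ⋂ j, {p : Matrix (Fin n) (Fin k) ℝ × (Fin k → ℝ) |
              p.1 i j ∈ Set.Icc (-R) R} := by
        ext p; simp only [Set.mem_setOf_eq, Set.mem_iInter]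
      rw [heq]
      refine isClosed_iInter fun i => isClosed_iInter fun j => ?_
      have hcf : Continuous (fun p : Matrix (Fin n) (Fin k) ℝ × (Fin k → ℝ) => p.1) :=
        continuous_fst
      exact isClosed_Icc.preimage (hcf.matrix_elem i j)
    have h2 : IsClosed {p : Matrix (Fin n) (Fin k) ℝ × (Fin k → ℝ) |
        (qf N11 N12 N22 p.1).PosSemidef} := by
      have h2a : IsClosed {p : Matrix (Fin n) (Fin k) ℝ × (Fin k → ℝ) |
          (qf N11 N12 N22 p.1).IsHermitian} := by
        exact isClosed_eq (hqcont N11 N12 N22).matrix_conjTranspose (hqcont N11 N12 N22)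
      have h2b : IsClosed {p : Matrix (Fin n) (Fin k) ℝ × (Fin k → ℝ) |
          ∀ x : Fin k → ℝ, 0 ≤ star x ⬝ᵥ (qf N11 N12 N22 p.1) *ᵥ x} := by
        have heq : {p : Matrix (Fin n) (Fin k) ℝ × (Fin k → ℝ) |
            ∀ x : Fin k → ℝ, 0 ≤ star x ⬝ᵥ (qf N11 N12 N22 p.1) *ᵥ x}
            = ⋂ x : Fin k → ℝ, {p : Matrix (Fin n) (Fin k) ℝ × (Fin k → ℝ) |
                0 ≤ star x ⬝ᵥ (qf N11 N12 N22 p.1) *ᵥ x} := by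
          ext p; simp only [Set.mem_setOf_eq, Set.mem_iInter]
        rw [heq]
        refine isClosed_iInter fun x => ?_
        exact isClosed_le continuous_const
          (continuous_const.dotProduct ((hqcont N11 N12 N22).matrix_mulVec
            continuous_const))
      convert h2a.inter h2b using 1
      ext p
      exact Matrix.posSemidef_iff_dotProduct_mulVec
    have h3 : IsClosed {p : Matrix (Fin n) (Fin k) ℝ × (Fin k → ℝ) |
        ∀ j, p.2 j ∈ Set.Icc (-1:ℝ) 1} := by
      have heq : {p : Matrix (Fin n) (Fin k) ℝ × (Fin k → ℝ) | ∀ j, p.2 j ∈ Set.Icc (-1:ℝ) 1}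
          = ⋂ j, {p : Matrix (Fin n) (Fin k) ℝ × (Fin k → ℝ) | p.2 j ∈ Set.Icc (-1:ℝ) 1} := by
        ext p; simp only [Set.mem_setOf_eq, Set.mem_iInter]
      rw [heq]
      refine isClosed_iInter fun j => ?_
      exact isClosed_Icc.preimage ((continuous_apply j).comp continuous_snd)
    have h4 : IsClosed {p : Matrix (Fin n) (Fin k) ℝ × (Fin k → ℝ) | p.2 ⬝ᵥ p.2 = 1} :=
      isClosed_eq (continuous_snd.dotProduct continuous_snd) continuous_const
    exact h1.inter (h2.inter (h3.inter h4))
  have hSScp : IsCompact SS := by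
    refine ((isCompact_mbox (m := n) (l := k) R).prod (isCompact_box (m := k) 1)).of_isClosed_subset
      hSScl ?_
    intro p hp
    exact ⟨hp.1, hp.2.2.1⟩
  -- rewriting the goal quadratic form
  have hgoal_eq : ∀ (β : ℝ) (Z : Matrix (Fin n) (Fin k) ℝ),
      (fromRows (1 : Matrix (Fin k) (Fin k) ℝ) Z)ᵀ * (fromBlocks M11 M12 M12ᵀ M22 - fromBlocks (β • 1) 0 0 0) * fromRows 1 Z
        = qf M11 M12 M22 Z - β • 1 := by
    intro β Z
    have hb : fromBlocks M11 M12 M12ᵀ M22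
          - fromBlocks (β • (1 : Matrix (Fin k) (Fin k) ℝ)) 0 0 0
        = fromBlocks (M11 - β • 1) M12 M12ᵀ M22 := by
      rw [sub_eq_add_neg, fromBlocks_neg, fromBlocks_add]
      simp [sub_eq_add_neg]
    rw [hb, quadExpand]
    simp only [qf]
    abel
  have hherm : ∀ (β : ℝ) (Z : Matrix (Fin n) (Fin k) ℝ),
      (qf N11 N12 N22 Z).PosSemidef → (qf M11 M12 M22 Z - β • 1).IsHermitian := by
    intro β Z hZ
    have h1 : (qf M11 M12 M22 Z).IsHermitian := by
      have := (hPD Z ((congrArg PosSemidef (quadExpand N11 N12 N22 Z)).mpr hZ)).1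
      exact (congrArg IsHermitian (quadExpand M11 M12 M22 Z)).mp this
    have h2 : ((β : ℝ) • (1 : Matrix (Fin k) (Fin k) ℝ)).IsHermitian := by
      rw [Matrix.IsHermitian, conjTranspose_smul, conjTranspose_one]
      simp
    exact h1.sub h2
  -- normalized membership
  have hx'mem : ∀ (Z : Matrix (Fin n) (Fin k) ℝ), (qf N11 N12 N22 Z).PosSemidef →
      ∀ x : Fin k → ℝ, x ≠ 0 → ∃ (W : Matrix (Fin n) (Fin k) ℝ) (x' : Fin k → ℝ),
        (W, x') ∈ SS ∧ qf M11 M12 M22 W = qf M11 M12 M22 Z ∧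
          x = Real.sqrt (x ⬝ᵥ x) • x' ∧ 0 < Real.sqrt (x ⬝ᵥ x) := by
    intro Z hZ x hx
    obtain ⟨W, hWbox, hWN, hWM⟩ := key Z hZ
    have hpos : 0 < x ⬝ᵥ x :=
      lt_of_le_of_ne (dp_self_nonneg x) fun h => hx (dotProduct_self_eq_zero.mp h.symm)
    have hs : 0 < Real.sqrt (x ⬝ᵥ x) := Real.sqrt_pos.mpr hpos
    set x' : Fin k → ℝ := (Real.sqrt (x ⬝ᵥ x))⁻¹ • x with hx'
    have hdot : x' ⬝ᵥ x' = 1 := by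
      rw [hx', smul_dotProduct, dotProduct_smul, smul_eq_mul, smul_eq_mul,
        ← mul_assoc, ← mul_inv, Real.mul_self_sqrt hpos.le]
      exact inv_mul_cancel₀ hpos.ne'
    have hbox : ∀ j, x' j ∈ Set.Icc (-1:ℝ) 1 := by
      intro j
      have h := abs_entry_le_sqrt x' j
      rw [hdot, Real.sqrt_one] at h
      exact ⟨neg_le_of_abs_le h, le_of_abs_le h⟩
    refine ⟨W, x', ⟨hWbox, by rw [hWN]; exact hZ, hbox, hdot⟩, hWM, ?_, hs⟩
    rw [hx', smul_smul, mul_inv_cancel₀ hs.ne', one_smul]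
  -- scaling of quadratic forms
  have hscaleq : ∀ (A : Matrix (Fin k) (Fin k) ℝ) (s : ℝ) (x' : Fin k → ℝ),
      (s • x') ⬝ᵥ A *ᵥ (s • x') = s * s * (x' ⬝ᵥ A *ᵥ x') := by
    intro A s x'
    rw [smul_dotProduct, Matrix.mulVec_smul, dotProduct_smul, smul_eq_mul,
      smul_eq_mul]
    ring
  by_cases hne : SS.Nonempty
  · obtain ⟨p₀, hp₀, hmin'⟩ := hSScp.exists_isMinOn hne
      ((continuous_snd.dotProduct
        ((hqcont M11 M12 M22).matrix_mulVec continuous_snd)).continuousOn)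
    set μ : ℝ := p₀.2 ⬝ᵥ (qf M11 M12 M22 p₀.1) *ᵥ p₀.2 with hμdef
    have hMpd : (qf M11 M12 M22 p₀.1).PosDef := by
      have := hPD p₀.1 ((congrArg PosSemidef (quadExpand N11 N12 N22 p₀.1)).mpr hp₀.2.1)
      exact (congrArg PosDef (quadExpand M11 M12 M22 p₀.1)).mp this
    have hx0 : p₀.2 ≠ 0 := by
      intro h
      have h2 := hp₀.2.2.2
      rw [h] at h2
      simp at h2
    have hμpos : 0 < μ := by
      have := hMpd.dotProduct_mulVec_pos hx0
      simpa using this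
    refine ⟨μ/2, by positivity, ?_⟩
    intro Z hZraw
    have hZ : (qf N11 N12 N22 Z).PosSemidef := (congrArg PosSemidef (quadExpand N11 N12 N22 Z)).mp hZraw
    refine (congrArg PosDef (hgoal_eq _ Z)).mpr ?_
    refine Matrix.PosDef.of_dotProduct_mulVec_pos (hherm _ _ hZ) ?_
    intro x hx
    obtain ⟨W, x', hmem, hWM, hxeq, hs⟩ := hx'mem Z hZ x hx
    have hge : μ ≤ x' ⬝ᵥ (qf M11 M12 M22 W) *ᵥ x' := hmin' hmem
    have hstar : star x = x := by funext i; simp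
    have hss : x ⬝ᵥ x = Real.sqrt (x ⬝ᵥ x) * Real.sqrt (x ⬝ᵥ x) :=
      (Real.mul_self_sqrt (dp_self_nonneg x)).symm
    have hexp : x ⬝ᵥ (qf M11 M12 M22 Z - (μ/2) • 1) *ᵥ x
        = Real.sqrt (x ⬝ᵥ x) * Real.sqrt (x ⬝ᵥ x) * (x' ⬝ᵥ (qf M11 M12 M22 W) *ᵥ x')
          - (μ/2) * (Real.sqrt (x ⬝ᵥ x) * Real.sqrt (x ⬝ᵥ x)) := by
      rw [Matrix.sub_mulVec, dotProduct_sub]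
      congr 1
      · conv_lhs => rw [← hWM, hxeq]
        exact hscaleq _ _ _
      · rw [Matrix.smul_mulVec, Matrix.one_mulVec, dotProduct_smul, smul_eq_mul,
          ← hss]
    rw [hstar, hexp]
    nlinarith [mul_pos hs hs]
  · refine ⟨1, one_pos, ?_⟩
    intro Z hZraw
    have hZ : (qf N11 N12 N22 Z).PosSemidef := (congrArg PosSemidef (quadExpand N11 N12 N22 Z)).mp hZraw
    refine (congrArg PosDef (hgoal_eq _ Z)).mpr ?_
    refine Matrix.PosDef.of_dotProduct_mulVec_pos (hherm _ _ hZ) ?_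
    intro x hx
    exfalso
    obtain ⟨W, x', hmem, -, -, -⟩ := hx'mem Z hZ x hx
    exact hne ⟨_, hmem⟩
end

section
/- Let N ∈ ℝ^{(k+n)×(k+n)} be symmetric, partitioned as N = [[N₁₁, N₁₂], [N₁₂ᵀ, N₂₂]] with N₁₁ ∈ ℝ^{k×k}. If N is nonsingular, N₁₁ is positive semidefinite and N₂₂ is negative definite, then the Schur complement N₁₁ − N₁₂ N₂₂⁻¹ N₁₂ᵀ is positive definite, and the matrix Z̄ := −N₂₂⁻¹ N₁₂ᵀ satisfies the generalized Slater condition, i.e., [I; Z̄]ᵀ N [I; Z̄] is positive definite. -/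
open Matrix

lemma posDef_of_posSemidef_isUnit_det {n : ℕ} {S : Matrix (Fin n) (Fin n) ℝ}
    (hS : S.PosSemidef) (hdet : IsUnit S.det) : S.PosDef := by
  haveI : Invertible S := S.invertibleOfIsUnitDet hdet
  refine .of_dotProduct_mulVec_pos hS.1 (fun x hx => ?_)
  rcases lt_or_eq_of_le (hS.dotProduct_mulVec_nonneg x) with h | h
  · exact h
  · exfalso
    have h0 : S *ᵥ x = 0 := (hS.dotProduct_mulVec_zero_iff x).mp h.symm
    have : x = 0 := by
      have := congrArg (fun v => S⁻¹ *ᵥ v) h0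
      simpa [Matrix.mulVec_mulVec, Matrix.nonsing_inv_mul S hdet] using this
    exact hx this

/-- Schur complement positivity and the generalized Slater point `Z̄ = -N₂₂⁻¹ N₁₂ᵀ`
(proof of Corollary 1 of van Waarde–Camlibel–Mesbahi). -/
theorem schur_complement_slater_point {k n : ℕ}
    (N11 : Matrix (Fin k) (Fin k) ℝ) (N12 : Matrix (Fin k) (Fin n) ℝ)
    (N22 : Matrix (Fin n) (Fin n) ℝ)
    (N : Matrix (Fin k ⊕ Fin n) (Fin k ⊕ Fin n) ℝ)
    (hNdef : N = fromBlocks N11 N12 N12ᵀ N22)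
    (hN : N.IsSymm)
    (hNns : IsUnit N.det) (hN11 : N11.PosSemidef) (hN22 : (-N22).PosDef) :
    (N11 - N12 * N22⁻¹ * N12ᵀ).PosDef ∧
      ((fromRows (1 : Matrix (Fin k) (Fin k) ℝ) (-(N22⁻¹ * N12ᵀ)))ᵀ * N *
        fromRows (1 : Matrix (Fin k) (Fin k) ℝ) (-(N22⁻¹ * N12ᵀ))).PosDef := by
  -- N22 is invertible
  have hdet22 : IsUnit N22.det := by
    have h := hN22.det_pos
    rw [Matrix.det_neg] at h
    have : N22.det ≠ 0 := by
      intro h0; rw [h0, mul_zero] at h; exact lt_irrefl 0 h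
    exact isUnit_iff_ne_zero.mpr this
  haveI : Invertible N22 := N22.invertibleOfIsUnitDet hdet22
  set S := N11 - N12 * N22⁻¹ * N12ᵀ with hSdef
  -- inverse of -N22
  have hneginv : (-N22)⁻¹ = -(N22⁻¹) := by
    haveI : Invertible (-N22) := (-N22).invertibleOfIsUnitDet (by
      exact isUnit_iff_ne_zero.mpr (ne_of_gt hN22.det_pos))
    apply Matrix.inv_eq_right_inv
    simp [Matrix.mul_nonsing_inv N22 hdet22]
  -- S is PosSemidef
  have hSpsd : S.PosSemidef := by
    have h1 : (N12 * (-N22)⁻¹ * N12ᴴ).PosSemidef :=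
      hN22.inv.posSemidef.mul_mul_conjTranspose_same N12
    have h2 : S = N11 + N12 * (-N22)⁻¹ * N12ᴴ := by
      rw [hneginv]
      simp [hSdef, Matrix.conjTranspose_eq_transpose_of_trivial, Matrix.mul_neg,
        Matrix.neg_mul, sub_eq_add_neg]
    rw [h2]
    exact hN11.add h1
  -- det S is a unit via block determinant
  have hdetN : N.det = N22.det * S.det := by
    rw [hNdef, Matrix.det_fromBlocks₂₂, Matrix.invOf_eq_nonsing_inv]
  have hdetS : IsUnit S.det := by
    rw [hdetN] at hNns
    exact (isUnit_of_mul_isUnit_right hNns)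
  have hSpd : S.PosDef := posDef_of_posSemidef_isUnit_det hSpsd hdetS
  refine ⟨hSpd, ?_⟩
  -- the congruence equals S
  have hcong : (fromRows (1 : Matrix (Fin k) (Fin k) ℝ) (-(N22⁻¹ * N12ᵀ)))ᵀ * N * fromRows (1 : Matrix (Fin k) (Fin k) ℝ) (-(N22⁻¹ * N12ᵀ)) = S := by
    rw [hNdef, Matrix.transpose_fromRows, Matrix.mul_assoc, Matrix.fromBlocks_mul_fromRows,
      Matrix.fromCols_mul_fromRows]
    have hz : N22 * -(N22⁻¹ * N12ᵀ) = -N12ᵀ := by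
      rw [Matrix.mul_neg, ← Matrix.mul_assoc, Matrix.mul_nonsing_inv N22 hdet22, Matrix.one_mul]
    rw [hz]
    simp [hSdef, Matrix.mul_neg, Matrix.mul_assoc, sub_eq_add_neg]
  rw [hcong]
  exact hSpd
end

section
/- Let X₊, X₋ ∈ ℝ^{n×T}, U₋ ∈ ℝ^{m×T}, and let Φ₁₁ ∈ ℝ^{n×n} be symmetric, Φ₁₂ ∈ ℝ^{n×T}, Φ₂₂ ∈ ℝ^{T×T} symmetric negative definite, and set Φ := [[Φ₁₁, Φ₁₂], [Φ₁₂ᵀ, Φ₂₂]]. Define Σ as the set of pairs (A, B) ∈ ℝ^{n×n} × ℝ^{n×m} for which there exists W₋ ∈ ℝ^{n×T} satisfying X₊ = A X₋ + B U₋ + W₋ and [I; W₋ᵀ]ᵀ Φ [I; W₋ᵀ] positive semidefinite. Then Σ is exactly the set of pairs (A, B) satisfying the quadratic matrix inequality [I; Aᵀ; Bᵀ]ᵀ · ([[I, X₊], [0, −X₋], [0, −U₋]] Φ [[I, X₊], [0, −X₋], [0, −U₋]]ᵀ) · [I; Aᵀ; Bᵀ] positive semidefinite, where [I; Aᵀ;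 Bᵀ] denotes the (n+n+m)×n matrix obtained by stacking the n×n identity on top of Aᵀ and Bᵀ, and [[I, X₊], [0, −X₋], [0, −U₋]] is the (n+n+m)×(n+T) block matrix with block rows (I, X₊), (0, −X₋), (0, −U₋). -/
open Matrix

lemma key_eq {n m T : ℕ}
    (Xp Xm : Matrix (Fin n) (Fin T) ℝ) (Um : Matrix (Fin m) (Fin T) ℝ)
    (A : Matrix (Fin n) (Fin n) ℝ) (B : Matrix (Fin n) (Fin m) ℝ)
    (W : Matrix (Fin n) (Fin T) ℝ) (hW : Xp = A * Xm + B * Um + W) :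
    (fromBlocks (1 : Matrix (Fin n) (Fin n) ℝ) Xp 0 (fromRows (-Xm) (-Um)))ᵀ * fromRows (1 : Matrix (Fin n) (Fin n) ℝ) (fromRows Aᵀ Bᵀ)
      = fromRows (1 : Matrix (Fin n) (Fin n) ℝ) Wᵀ := by
  rw [fromBlocks_transpose, transpose_fromRows, fromBlocks_mul_fromRows,
    fromCols_mul_fromRows]
  subst hW
  simp [Matrix.transpose_add, Matrix.transpose_mul]
  exact congrArg _ (by abel)

/-- Lemma 1 of van Waarde–Camlibel–Mesbahi: the set `Σ` of systems explaining the data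
equals the set of pairs `(A, B)` satisfying a quadratic matrix inequality. -/
theorem sigma_QMI_characterization {n m T : ℕ}
    (Xp Xm : Matrix (Fin n) (Fin T) ℝ) (Um : Matrix (Fin m) (Fin T) ℝ)
    (Φ11 : Matrix (Fin n) (Fin n) ℝ) (Φ12 : Matrix (Fin n) (Fin T) ℝ)
    (Φ22 : Matrix (Fin T) (Fin T) ℝ)
    (hΦ11 : Φ11.IsSymm) (hΦ22 : (-Φ22).PosDef) :
    ∀ (A : Matrix (Fin n) (Fin n) ℝ) (B : Matrix (Fin n) (Fin m) ℝ),
      (∃ W : Matrix (Fin n) (Fin T) ℝ, Xp = A * Xm + B * Um + W ∧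
        ((fromRows (1 : Matrix (Fin n) (Fin n) ℝ) Wᵀ)ᵀ * fromBlocks Φ11 Φ12 Φ12ᵀ Φ22 * fromRows (1 : Matrix (Fin n) (Fin n) ℝ) Wᵀ).PosSemidef) ↔
      ((fromRows (1 : Matrix (Fin n) (Fin n) ℝ) (fromRows Aᵀ Bᵀ))ᵀ *
        (fromBlocks (1 : Matrix (Fin n) (Fin n) ℝ) Xp 0 (fromRows (-Xm) (-Um)) * fromBlocks Φ11 Φ12 Φ12ᵀ Φ22 *
          (fromBlocks (1 : Matrix (Fin n) (Fin n) ℝ) Xp 0 (fromRows (-Xm) (-Um)))ᵀ) *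
        fromRows (1 : Matrix (Fin n) (Fin n) ℝ) (fromRows Aᵀ Bᵀ)).PosSemidef := by
  intro A B
  set M := fromBlocks (1 : Matrix (Fin n) (Fin n) ℝ) Xp 0 (fromRows (-Xm) (-Um)) with hM
  set S := fromRows (1 : Matrix (Fin n) (Fin n) ℝ) (fromRows Aᵀ Bᵀ) with hS
  set Φ := fromBlocks Φ11 Φ12 Φ12ᵀ Φ22 with hΦ
  have hrw : Sᵀ * (M * Φ * Mᵀ) * S = (Mᵀ * S)ᵀ * Φ * (Mᵀ * S) := by
    rw [Matrix.transpose_mul, Matrix.transpose_transpose]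
    simp only [Matrix.mul_assoc]
  constructor
  · rintro ⟨W, hW, hpsd⟩
    rw [hrw, key_eq Xp Xm Um A B W hW]
    exact hpsd
  · intro hpsd
    refine ⟨Xp - A * Xm - B * Um, by abel, ?_⟩
    rw [hrw, key_eq Xp Xm Um A B (Xp - A * Xm - B * Um) (by abel)] at hpsd
    exact hpsd
end

section
/- Let W ∈ ℝ^{n×T}, let Φ₁₁ ∈ ℝ^{n×n} be symmetric positive definite, and let Φ₂₂ ∈ ℝ^{T×T} be symmetric negative definite. Then [I; Wᵀ]ᵀ [[Φ₁₁, 0], [0, Φ₂₂]] [I; Wᵀ] = Φ₁₁ + W Φ₂₂ Wᵀ is positive semidefinite if and only if −Φ₂₂⁻¹ − Wᵀ Φ₁₁⁻¹ W is positive semidefinite. -/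
open Matrix

/-- Remark 1 of van Waarde–Camlibel–Mesbahi: equivalence of the two noise models
when `Φ₁₁ > 0` and `Φ₁₂ = 0`. -/
theorem noise_model_equivalence {n T : ℕ}
    (W : Matrix (Fin n) (Fin T) ℝ)
    (Φ11 : Matrix (Fin n) (Fin n) ℝ) (Φ22 : Matrix (Fin T) (Fin T) ℝ)
    (hΦ11 : Φ11.PosDef) (hΦ22 : (-Φ22).PosDef) :
    (fromRows (1 : Matrix (Fin n) (Fin n) ℝ) Wᵀ)ᵀ * fromBlocks Φ11 0 0 Φ22 *
      fromRows (1 : Matrix (Fin n) (Fin n) ℝ) Wᵀ = Φ11 + W * Φ22 * Wᵀ ∧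
    ((Φ11 + W * Φ22 * Wᵀ).PosSemidef ↔ (-Φ22⁻¹ - Wᵀ * Φ11⁻¹ * W).PosSemidef) := by
  have hinv11 : IsUnit Φ11.det := isUnit_iff_ne_zero.mpr hΦ11.det_pos.ne'
  have hinv22' : IsUnit (-Φ22).det := isUnit_iff_ne_zero.mpr hΦ22.det_pos.ne'
  have hinv22 : IsUnit Φ22.det := by
    have : (-Φ22).det = (-1)^(Fintype.card (Fin T)) * Φ22.det := by
      simp [Matrix.det_neg]
    rw [this] at hinv22'
    exact (IsUnit.mul_iff.mp hinv22').2
  haveI := Φ11.invertibleOfIsUnitDet hinv11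
  haveI := Φ22.invertibleOfIsUnitDet hinv22
  have hninv : (-Φ22)⁻¹ = -Φ22⁻¹ := by
    apply Matrix.inv_eq_right_inv
    simp [Matrix.mul_nonsing_inv _ hinv22]
  have hninv2 : (-Φ22⁻¹)⁻¹ = -Φ22 := by
    apply Matrix.inv_eq_right_inv
    simp [Matrix.nonsing_inv_mul _ hinv22]
  have hneg : (-Φ22⁻¹).PosDef := hninv ▸ hΦ22.inv
  haveI : Invertible (-Φ22⁻¹) := Matrix.invertibleOfIsUnitDet _ (isUnit_iff_ne_zero.mpr hneg.det_pos.ne')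
  constructor
  · rw [transpose_fromRows, transpose_one, transpose_transpose, Matrix.mul_assoc,
      fromBlocks_mul_fromRows, fromCols_mul_fromRows]
    simp [Matrix.mul_assoc]
  · have h1 := Matrix.PosDef.fromBlocks₂₂ Φ11 W hneg
    have h2 := Matrix.PosDef.fromBlocks₁₁ (R' := ℝ) W (-Φ22⁻¹) hΦ11
    rw [show Wᴴ = Wᵀ from rfl] at h1 h2
    have e1 : Φ11 - W * (-Φ22⁻¹)⁻¹ * Wᵀ = Φ11 + W * Φ22 * Wᵀ := by
      rw [hninv2]; simp [Matrix.mul_neg, Matrix.neg_mul, sub_neg_eq_add]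
    rw [e1] at h1
    exact h1.symm.trans h2
end

section
/- Let X₊, X₋ ∈ ℝ^{n×T}, U₋ ∈ ℝ^{m×T}, Φ = [[Φ₁₁, Φ₁₂], [Φ₁₂ᵀ, Φ₂₂]] with Φ₁₁ symmetric and Φ₂₂ symmetric negative definite. Let Σ := { (A,B) : X₊ = AX₋ + BU₋ + W₋ for some W₋ with [I; W₋ᵀ]ᵀ Φ [I; W₋ᵀ] positive semidefinite }, and assume Σ is nonempty. Suppose P ∈ ℝ^{n×n} is symmetric positive definite and K ∈ ℝ^{m×n} are such that P − (A+BK) P (A+BK)ᵀ is positive definite for all (A,B) ∈ Σ. Then the column space of the (n+m)×n matrix [I; K] (the n×n identity stacked on top of K) is contained in the column space of the (n+m)×T matrix [X₋; U₋] (X₋ stacked on top of U₋); equivalently, ker [X₋; U₋]ᵀ ⊆ ker [I, Kᵀ] viewed as maps on ℝ^{n+m}. -/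
open Matrix

section aux
variable {α β γ : Type*} [Fintype β]

lemma vecMulVec_mul_right (a : α → ℝ) (u : β → ℝ) (M : Matrix β γ ℝ) :
    vecMulVec a u * M = vecMulVec a (Mᵀ *ᵥ u) := by
  ext i j
  simp only [vecMulVec_apply, mul_apply, mulVec, dotProduct, transpose_apply, Finset.mul_sum]
  exact Finset.sum_congr rfl fun k _ => by ring

lemma vecMulVec_add_right (a : α → ℝ) (u u' : β → ℝ) :
    vecMulVec a (u + u') = vecMulVec a u + vecMulVec a u' := by
  ext i j; simp [vecMulVec_apply, mul_add]

lemma vecMulVec_transpose' (a : α → ℝ) (u : β → ℝ) :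
    (vecMulVec a u)ᵀ = vecMulVec u a := by
  ext i j; simp [vecMulVec_apply, mul_comm]

lemma vecMulVec_mulVec (a : α → ℝ) (u : β → ℝ) (x : β → ℝ) :
    vecMulVec a u *ᵥ x = (u ⬝ᵥ x) • a := by
  ext i
  simp only [mulVec, dotProduct, vecMulVec_apply, Pi.smul_apply, smul_eq_mul, Finset.mul_sum]
  rw [Finset.sum_mul]
  exact Finset.sum_congr rfl fun k _ => by ring
end aux

lemma range_mulVec_subset_of_ker {k ι τ : Type*} [Fintype k] [Fintype ι] [Fintype τ]
    [DecidableEq k] [DecidableEq τ]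
    (F : Matrix k ι ℝ) (B : Matrix k τ ℝ)
    (h : ∀ z : k → ℝ, Bᵀ *ᵥ z = 0 → Fᵀ *ᵥ z = 0) :
    Set.range F.mulVec ⊆ Set.range B.mulVec := by
  rintro x ⟨c, rfl⟩
  have hx : F *ᵥ c ∈ LinearMap.range B.mulVecLin := by
    rw [← Subspace.forall_mem_dualAnnihilator_apply_eq_zero_iff]
    intro φ hφ
    set z : k → ℝ := fun i => φ (Pi.single i 1) with hzdef
    have hφeq : ∀ u : k → ℝ, φ u = z ⬝ᵥ u := by
      intro u
      rw [LinearMap.pi_apply_eq_sum_univ φ u]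
      simp only [dotProduct, hzdef, smul_eq_mul]
      refine Finset.sum_congr rfl fun x _ => ?_
      rw [mul_comm]
      congr 1
      · congr 1; funext j; simp [Pi.single_apply, eq_comm]
    have hBz : Bᵀ *ᵥ z = 0 := by
      funext j
      have hmem : B *ᵥ Pi.single j 1 ∈ LinearMap.range B.mulVecLin :=
        ⟨Pi.single j 1, rfl⟩
      have h0 : φ (B *ᵥ Pi.single j 1) = 0 :=
        (Submodule.mem_dualAnnihilator φ).mp hφ _ hmem
      rw [hφeq] at h0
      rw [dotProduct_mulVec, ← mulVec_transpose, dotProduct_single, mul_one] at h0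
      simpa using h0
    have := h z hBz
    rw [hφeq, dotProduct_mulVec, ← mulVec_transpose, this]
    simp
  obtain ⟨y, hy⟩ := hx
  exact ⟨y, hy⟩

/-- Remark 3 of van Waarde–Camlibel–Mesbahi: any quadratically stabilizing feedback
gain `K` satisfies `im [I; K] ⊆ im [X₋; U₋]`. -/
theorem stabilizing_gain_image_inclusion {n m T : ℕ}
    (Xp Xm : Matrix (Fin n) (Fin T) ℝ) (Um : Matrix (Fin m) (Fin T) ℝ)
    (Φ11 : Matrix (Fin n) (Fin n) ℝ) (Φ12 : Matrix (Fin n) (Fin T) ℝ)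
    (Φ22 : Matrix (Fin T) (Fin T) ℝ)
    (hΦ11 : Φ11.IsSymm) (hΦ22 : (-Φ22).PosDef)
    (Sigma : Set (Matrix (Fin n) (Fin n) ℝ × Matrix (Fin n) (Fin m) ℝ))
    (hSigma : Sigma = { p | ∃ W : Matrix (Fin n) (Fin T) ℝ,
      Xp = p.1 * Xm + p.2 * Um + W ∧
      ((fromRows (1 : Matrix (Fin n) (Fin n) ℝ) Wᵀ)ᵀ * fromBlocks Φ11 Φ12 Φ12ᵀ Φ22 *
        fromRows (1 : Matrix (Fin n) (Fin n) ℝ) Wᵀ).PosSemidef })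
    (hne : Sigma.Nonempty)
    (P : Matrix (Fin n) (Fin n) ℝ) (K : Matrix (Fin m) (Fin n) ℝ)
    (hP : P.PosDef)
    (hstab : ∀ A B, (A, B) ∈ Sigma → (P - (A + B * K) * P * (A + B * K)ᵀ).PosDef) :
    Set.range (fromRows (1 : Matrix (Fin n) (Fin n) ℝ) K).mulVec ⊆
      Set.range (fromRows Xm Um).mulVec := by
  apply range_mulVec_subset_of_ker
  intro z hz
  set z₁ : Fin n → ℝ := z ∘ Sum.inl with hz1
  set z₂ : Fin m → ℝ := z ∘ Sum.inr with hz2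
  have hzelim : z = Sum.elim z₁ z₂ := (Sum.elim_comp_inl_inr z).symm
  have hker : Xmᵀ *ᵥ z₁ + Umᵀ *ᵥ z₂ = 0 := by
    rw [transpose_fromRows, hzelim, fromCols_mulVec_sumElim] at hz
    exact hz
  set v : Fin n → ℝ := z₁ + Kᵀ *ᵥ z₂ with hv
  have goal_eq : (fromRows (1 : Matrix (Fin n) (Fin n) ℝ) K)ᵀ *ᵥ z = v := by
    rw [transpose_fromRows, hzelim, fromCols_mulVec_sumElim]
    simp [hv]
  rw [goal_eq]
  by_contra hvne
  -- get a system from Sigma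
  obtain ⟨⟨A, B⟩, hAB⟩ := hne
  rw [hSigma] at hAB
  obtain ⟨W, hW, hpsd⟩ := hAB
  -- membership of perturbed systems
  have hmem : ∀ t : ℝ, (A + t • vecMulVec v z₁, B + t • vecMulVec v z₂) ∈ Sigma := by
    intro t
    rw [hSigma]
    refine ⟨W, ?_, hpsd⟩
    have h1 : vecMulVec v z₁ * Xm + vecMulVec v z₂ * Um = 0 := by
      rw [vecMulVec_mul_right, vecMulVec_mul_right, ← vecMulVec_add_right, hker]
      ext i j; simp [vecMulVec_apply]
    calc Xp = A * Xm + B * Um + W := hW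
    _ = (A + t • vecMulVec v z₁) * Xm + (B + t • vecMulVec v z₂) * Um + W := by
        rw [Matrix.add_mul, Matrix.add_mul, Matrix.smul_mul, Matrix.smul_mul]
        have : t • (vecMulVec v z₁ * Xm) + t • (vecMulVec v z₂ * Um) = 0 := by
          rw [← smul_add, h1, smul_zero]
        linear_combination (norm := abel_nf) -this
  set M : Matrix (Fin n) (Fin n) ℝ := A + B * K with hM
  have hMt : ∀ t : ℝ,
      (A + t • vecMulVec v z₁) + (B + t • vecMulVec v z₂) * K = M + t • vecMulVec v v := by
    intro t
    rw [Matrix.add_mul, Matrix.smul_mul, vecMulVec_mul_right]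
    rw [hM, hv]
    rw [vecMulVec_add_right, smul_add]
    abel
  set c : ℝ := v ⬝ᵥ v with hc
  have hcpos : 0 < c := by
    rcases lt_or_eq_of_le (Finset.sum_nonneg fun i _ => mul_self_nonneg (v i)) with h | h
    · exact h
    · exact absurd (dotProduct_self_eq_zero.mp h.symm) hvne
  set w : Fin n → ℝ := Mᵀ *ᵥ v with hw
  -- quadratic form positivity
  have key : ∀ t : ℝ, 0 < v ⬝ᵥ (P *ᵥ v) -
      (w + (t * c) • v) ⬝ᵥ (P *ᵥ (w + (t * c) • v)) := by
    intro t
    have hpd := hstab _ _ (hmem t)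
    rw [hMt t] at hpd
    have := hpd.dotProduct_mulVec_pos hvne
    simp only [star_trivial] at this
    have hMtv : (M + t • vecMulVec v v)ᵀ *ᵥ v = w + (t * c) • v := by
      rw [transpose_add, transpose_smul, vecMulVec_transpose', add_mulVec,
        smul_mulVec, _root_.vecMulVec_mulVec, ← hc, ← hw, smul_smul]
    have hexp : v ⬝ᵥ ((P - (M + t • vecMulVec v v) * P * (M + t • vecMulVec v v)ᵀ) *ᵥ v)
        = v ⬝ᵥ (P *ᵥ v) - (w + (t * c) • v) ⬝ᵥ (P *ᵥ (w + (t * c) • v)) := by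
      rw [sub_mulVec, dotProduct_sub]
      congr 1
      rw [Matrix.mul_assoc, ← mulVec_mulVec, ← mulVec_mulVec, dotProduct_mulVec,
        ← mulVec_transpose, hMtv]
    rw [hexp] at this
    exact this
  -- contradiction: evaluate at t = 1/c and t = -1/c
  have h1 := key (1 / c)
  have h2 := key (-(1 / c))
  have hcc : (1 / c) * c = 1 := by field_simp
  rw [hcc] at h1
  have hcc2 : (-(1 / c)) * c = -1 := by field_simp
  rw [hcc2] at h2
  have hsum := add_pos h1 h2
  have hPw : 0 ≤ w ⬝ᵥ (P *ᵥ w) := by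
    have := hP.posSemidef.dotProduct_mulVec_nonneg w
    simpa using this
  have hPv : 0 < v ⬝ᵥ (P *ᵥ v) := by
    have := hP.dotProduct_mulVec_pos hvne
    simpa using this
  -- expand the sum
  have hexp2 : (v ⬝ᵥ (P *ᵥ v) - (w + (1:ℝ) • v) ⬝ᵥ (P *ᵥ (w + (1:ℝ) • v))) +
      (v ⬝ᵥ (P *ᵥ v) - (w + (-1:ℝ) • v) ⬝ᵥ (P *ᵥ (w + (-1:ℝ) • v))) =
      - 2 * (w ⬝ᵥ (P *ᵥ w)) := by
    simp only [mulVec_add, mulVec_smul, dotProduct_add, add_dotProduct, smul_dotProduct,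
      dotProduct_smul, smul_eq_mul]
    ring
  rw [hexp2] at hsum
  linarith
end

section
/- Let f, g : ℝⁿ → ℝ be quadratic functions, i.e., f(x) = M₁₁ + 2 M₁₂ x + xᵀ M₂₂ x and g(x) = N₁₁ + 2 N₁₂ x + xᵀ N₂₂ x with M₁₁, N₁₁ ∈ ℝ, M₁₂, N₁₂ ∈ ℝ^{1×n}, and M₂₂, N₂₂ symmetric n×n. Suppose there exists x̄ ∈ ℝⁿ such that g(x̄) > 0. Then f(x) ≥ 0 for all x ∈ ℝⁿ such that g(x) ≥ 0 if and only if there exists a scalar α ≥ 0 such that f(x) − α g(x) ≥ 0 for all x ∈ ℝⁿ. -/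
lemma quad_coeff_nonneg {a b c : ℝ} (h : ∀ s : ℝ, 0 ≤ s → 0 ≤ a + b*s + c*s^2) : 0 ≤ c := by
  by_contra hc
  push_neg at hc
  set s : ℝ := max 1 ((|a| + |b| + 1)/(-c)) with hs
  have hs1 : (1:ℝ) ≤ s := le_max_left _ _
  have hs2 : (|a| + |b| + 1)/(-c) ≤ s := le_max_right _ _
  have hcpos : 0 < -c := by linarith
  have h2 : |a| + |b| + 1 ≤ (-c) * s := by
    rw [div_le_iff₀ hcpos] at hs2; linarith [hs2]
  have h3 := h s (by linarith)
  nlinarith [le_abs_self a, le_abs_self b, neg_abs_le b, abs_nonneg a, abs_nonneg b,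
    mul_le_mul_of_nonneg_right h2 (le_trans zero_le_one hs1)]

lemma half_angle {C S : ℝ} (h : C^2 + S^2 = 1) :
    ∃ c w : ℝ, c^2 + w^2 = 1 ∧ c^2 - w^2 = C ∧ 2*c*w = S := by
  have hC1 : -1 ≤ C := by nlinarith [sq_nonneg S, sq_nonneg (C+1)]
  rcases eq_or_lt_of_le hC1 with hC | hC
  · refine ⟨0, 1, by norm_num, by rw [← hC]; ring, ?_⟩
    have : S^2 = 0 := by nlinarith
    have : S = 0 := by nlinarith [sq_nonneg S]
    simp [this]
  · have hpos : 0 < (1 + C)/2 := by linarith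
    set c : ℝ := Real.sqrt ((1+C)/2) with hc
    have hc2 : c^2 = (1+C)/2 := Real.sq_sqrt (le_of_lt hpos)
    have hcpos : 0 < c := Real.sqrt_pos.2 hpos
    refine ⟨c, S/(2*c), ?_, ?_, ?_⟩
    · field_simp
      nlinarith [hc2]
    · field_simp
      nlinarith [hc2]
    · field_simp

lemma circle_cone (M1 M2 u1 u2 v1 v2 r : ℝ) (hr : r^2 ≤ 1) :
    ∃ σ C S : ℝ, 0 ≤ σ ∧ C^2 + S^2 = 1 ∧
      σ * (M1 + C*u1 + S*v1) = M1 + r*u1 ∧ σ * (M2 + C*u2 + S*v2) = M2 + r*u2 := by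
  by_cases hD : u1*v2 - u2*v1 = 0
  · -- u, v parallel (or zero)
    by_cases hu : u1 = 0 ∧ u2 = 0
    · exact ⟨1, 1, 0, zero_le_one, by norm_num, by rw [hu.1]; ring, by rw [hu.2]; ring⟩
    · have hu2 : 0 < u1^2 + u2^2 := by
        rcases not_and_or.1 hu with h | h <;> positivity
      set β : ℝ := (u1*v1 + u2*v2)/(u1^2+u2^2) with hβ
      have hv1 : v1 = β * u1 := by
        rw [hβ]; field_simp; linear_combination (-u2)*hD
      have hv2 : v2 = β * u2 := by
        rw [hβ]; field_simp; linear_combination u1*hD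
      set k2 : ℝ := 1 + β^2 with hk2
      have hk2pos : 0 < k2 := by positivity
      have hk2r : 0 ≤ k2 - r^2 := by nlinarith
      set a : ℝ := r/k2 with ha
      set bb : ℝ := Real.sqrt (k2 - r^2)/k2 with hbb
      have hbb2 : (Real.sqrt (k2-r^2))^2 = k2 - r^2 := Real.sq_sqrt hk2r
      have hak : a * k2 = r := by rw [ha]; field_simp
      have hbk : bb^2 * k2^2 = k2 - r^2 := by
        rw [hbb, div_pow, hbb2]; field_simp
      have key : (a^2 + bb^2) * k2 = 1 := by
        have ha2 : a^2 * k2^2 = r^2 := by rw [ha, div_pow]; field_simp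
        have hk2ne : k2 ≠ 0 := ne_of_gt hk2pos
        apply mul_left_cancel₀ hk2ne
        linear_combination ha2 + hbk
      have hCS : (a - bb*β) + β*(a*β + bb) = r := by
        linear_combination hak - a * hk2
      refine ⟨1, a - bb*β, a*β + bb, zero_le_one, ?_, ?_, ?_⟩
      · linear_combination key - (a^2 + bb^2) * hk2
      · rw [hv1]; linear_combination u1 * hCS
      · rw [hv2]; linear_combination u2 * hCS
  · -- independent case
    have hD' : u1*v2 - u2*v1 ≠ 0 := hD
    set D : ℝ := u1*v2 - u2*v1 with hDdef
    set m1 : ℝ := (M1*v2 - M2*v1)/D with hm1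
    set m2 : ℝ := (u1*M2 - u2*M1)/D with hm2
    have hT1 : u1*m1 + v1*m2 = M1 := by
      rw [hm1, hm2]; field_simp; ring
    have hT2 : u2*m1 + v2*m2 = M2 := by
      rw [hm1, hm2]; field_simp; ring
    clear_value m1 m2
    by_cases hq : (m1+r)^2 + m2^2 = 0
    · have h1 : m1 + r = 0 := by nlinarith [sq_nonneg (m1+r), sq_nonneg m2]
      have h2 : m2 = 0 := by nlinarith [sq_nonneg (m1+r), sq_nonneg m2]
      refine ⟨0, 1, 0, le_refl _, by norm_num, ?_, ?_⟩
      · linear_combination hT1 - u1*h1 - v1*h2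
      · linear_combination hT2 - u2*h1 - v2*h2
    · have hnqpos : 0 < (m1+r)^2 + m2^2 := by
        rcases (lt_or_eq_of_le (by positivity : (0:ℝ) ≤ (m1+r)^2 + m2^2)) with h | h
        · exact h
        · exact absurd h.symm hq
      set nq : ℝ := (m1+r)^2 + m2^2 with hnq
      set ip : ℝ := (m1+r)*m1 + m2*m2 with hip
      set mm : ℝ := m1^2 + m2^2 with hmm
      clear_value nq ip mm
      have hh1 : nq - 2*ip + mm - 1 ≤ 0 := by
        have : nq - 2*ip + mm - 1 = r^2 - 1 := by rw [hnq, hip, hmm]; ring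
        rw [this]; linarith
      have hdiscnn : 0 ≤ ip^2 - nq*(mm - 1) := by
        nlinarith [sq_nonneg (ip - nq), mul_nonneg (le_of_lt hnqpos)
          (by linarith : (0:ℝ) ≤ -(nq - 2*ip + mm - 1))]
      set s : ℝ := Real.sqrt (ip^2 - nq*(mm-1)) with hs
      have hs2 : s^2 = ip^2 - nq*(mm-1) := Real.sq_sqrt hdiscnn
      have hsnn : 0 ≤ s := Real.sqrt_nonneg _
      clear_value s
      set t : ℝ := (ip + s)/nq with ht
      have htnq : t * nq = ip + s := by rw [ht]; field_simp
      clear_value t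
      have ht1 : 1 ≤ t := by
        rw [ht, le_div_iff₀ hnqpos]
        rcases le_or_gt (nq - ip) 0 with h | h
        · linarith
        · have hle : nq - ip ≤ s := by
            have h2 : (nq - ip)^2 ≤ ip^2 - nq*(mm-1) := by nlinarith
            calc nq - ip = Real.sqrt ((nq-ip)^2) := (Real.sqrt_sq h.le).symm
              _ ≤ s := by rw [hs]; exact Real.sqrt_le_sqrt h2
          linarith
      have htpos : 0 < t := lt_of_lt_of_le one_pos ht1
      have hroot : nq*t^2 - 2*ip*t + mm - 1 = 0 := by
        have e : nq*(nq*t^2 - 2*ip*t + mm - 1) = (t*nq)^2 - 2*ip*(t*nq) + nq*(mm-1) := by ring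
        have e2 : (t*nq)^2 - 2*ip*(t*nq) + nq*(mm-1) = 0 := by
          rw [htnq]; linear_combination hs2
        rcases mul_eq_zero.1 (e.trans e2) with h | h
        · exact absurd h (ne_of_gt hnqpos)
        · exact h
      refine ⟨1/t, t*(m1+r) - m1, t*m2 - m2, le_of_lt (one_div_pos.mpr htpos), ?_, ?_, ?_⟩
      · linear_combination hroot - t^2*hnq + 2*t*hip - hmm
      · have key : M1 + (t*(m1+r) - m1)*u1 + (t*m2 - m2)*v1 = t*(M1 + r*u1) := by
          linear_combination (t-1) * hT1
        rw [key, one_div, inv_mul_cancel_left₀ (ne_of_gt htpos)]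
      · have key : M2 + (t*(m1+r) - m1)*u2 + (t*m2 - m2)*v2 = t*(M2 + r*u2) := by
          linear_combination (t-1) * hT2
        rw [key, one_div, inv_mul_cancel_left₀ (ne_of_gt htpos)]

variable {V : Type*} [AddCommGroup V] [Module ℝ V]

structure IsBil (b : V → V → ℝ) : Prop where
  addl : ∀ x y z, b (x+y) z = b x z + b y z
  smull : ∀ (c : ℝ) (x z : V), b (c•x) z = c * b x z
  symm : ∀ x y, b x y = b y x

namespace IsBil

variable {b : V → V → ℝ}

lemma addr (hb : IsBil b) (x y z : V) : b x (y+z) = b x y + b x z := by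
  rw [hb.symm, hb.addl, hb.symm y x, hb.symm z x]

lemma smulr (hb : IsBil b) (c : ℝ) (x z : V) : b x (c•z) = c * b x z := by
  rw [hb.symm, hb.smull, hb.symm]

lemma expand2 (hb : IsBil b) (x y : V) (c w : ℝ) :
    b (c•x + w•y) (c•x + w•y) = c^2 * b x x + 2*c*w * b x y + w^2 * b y y := by
  simp only [hb.addl, hb.addr, hb.smull, hb.smulr, hb.symm y x]
  ring

lemma expand1 (hb : IsBil b) (x y : V) (s : ℝ) :
    b (x + s•y) (x + s•y) = b x x + 2*s * b x y + s^2 * b y y := by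
  have := hb.expand2 x y 1 s
  simpa using this

end IsBil

lemma IsBil.zero {b : V → V → ℝ} (hb : IsBil b) (z : V) : b 0 z = 0 := by
  rw [show (0:V) = (0:ℝ) • (0:V) by simp, hb.smull]; ring

lemma IsBil.smul2 {b : V → V → ℝ} (hb : IsBil b) (ρ : ℝ) (q : V) :
    b (ρ•q) (ρ•q) = ρ^2 * b q q := by
  rw [hb.smull, hb.smulr]; ring

lemma dines {bA bB : V → V → ℝ} (hA : IsBil bA) (hB : IsBil bB) :
    Convex ℝ {p : ℝ × ℝ | ∃ z : V, p = (bA z z, bB z z)} := by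
  rintro p₁ ⟨z₁, rfl⟩ p₂ ⟨z₂, rfl⟩ a c ha hc hac
  obtain ⟨σ, C, S, hσ, hCSunit, h1, h2⟩ :=
    circle_cone ((bA z₁ z₁ + bA z₂ z₂)/2) ((bB z₁ z₁ + bB z₂ z₂)/2)
      ((bA z₁ z₁ - bA z₂ z₂)/2) ((bB z₁ z₁ - bB z₂ z₂)/2)
      (bA z₁ z₂) (bB z₁ z₂) (a - c) (by nlinarith [mul_nonneg ha hc])
  obtain ⟨cc, ww, hunit, hdiff, hprod⟩ := half_angle hCSunit
  refine ⟨Real.sqrt σ • (cc • z₁ + ww • z₂), ?_⟩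
  have hρ : (Real.sqrt σ)^2 = σ := Real.sq_sqrt hσ
  have eA : bA (Real.sqrt σ • (cc • z₁ + ww • z₂)) (Real.sqrt σ • (cc • z₁ + ww • z₂))
      = σ * (cc^2 * bA z₁ z₁ + 2*cc*ww * bA z₁ z₂ + ww^2 * bA z₂ z₂) := by
    rw [hA.smul2, hA.expand2, hρ]
  have eB : bB (Real.sqrt σ • (cc • z₁ + ww • z₂)) (Real.sqrt σ • (cc • z₁ + ww • z₂))
      = σ * (cc^2 * bB z₁ z₁ + 2*cc*ww * bB z₁ z₂ + ww^2 * bB z₂ z₂) := by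
    rw [hB.smul2, hB.expand2, hρ]
  have compA : a * bA z₁ z₁ + c * bA z₂ z₂
      = σ * (cc^2 * bA z₁ z₁ + 2*cc*ww * bA z₁ z₂ + ww^2 * bA z₂ z₂) := by
    linear_combination ((bA z₁ z₁ + bA z₂ z₂)/2) * hac - h1
      - σ*((bA z₁ z₁ + bA z₂ z₂)/2)*hunit - σ*((bA z₁ z₁ - bA z₂ z₂)/2)*hdiff
      - σ*(bA z₁ z₂)*hprod
  have compB : a * bB z₁ z₁ + c * bB z₂ z₂
      = σ * (cc^2 * bB z₁ z₁ + 2*cc*ww * bB z₁ z₂ + ww^2 * bB z₂ z₂) := by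
    linear_combination ((bB z₁ z₁ + bB z₂ z₂)/2) * hac - h2
      - σ*((bB z₁ z₁ + bB z₂ z₂)/2)*hunit - σ*((bB z₁ z₁ - bB z₂ z₂)/2)*hdiff
      - σ*(bB z₁ z₂)*hprod
  rw [eA, eB, ← compA, ← compB]
  simp [Prod.ext_iff, smul_eq_mul]

lemma homogeneous_S {bA bB : V → V → ℝ} (hA : IsBil bA) (hB : IsBil bB)
    (slater : ∃ z : V, 0 < bB z z) (h : ∀ z : V, 0 ≤ bB z z → 0 ≤ bA z z) :
    ∃ α : ℝ, 0 ≤ α ∧ ∀ z : V, 0 ≤ bA z z - α * bB z z := by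
  have hWconv : Convex ℝ {p : ℝ × ℝ | ∃ z : V, p = (bA z z, bB z z)} := dines hA hB
  have hfstlin : IsLinearMap ℝ (fun p : ℝ × ℝ => p.1) := ⟨fun _ _ => rfl, fun _ _ => rfl⟩
  have hsndlin : IsLinearMap ℝ (fun p : ℝ × ℝ => p.2) := ⟨fun _ _ => rfl, fun _ _ => rfl⟩
  have hQeq : {p : ℝ × ℝ | p.1 < 0 ∧ 0 < p.2}
      = {p : ℝ × ℝ | p.1 < 0} ∩ {p : ℝ × ℝ | 0 < p.2} := rfl
  have hQconv : Convex ℝ {p : ℝ × ℝ | p.1 < 0 ∧ 0 < p.2} := by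
    rw [hQeq]
    exact (convex_halfSpace_lt hfstlin 0).inter (convex_halfSpace_gt hsndlin 0)
  have hQopen : IsOpen {p : ℝ × ℝ | p.1 < 0 ∧ 0 < p.2} := by
    rw [hQeq]
    exact (isOpen_lt continuous_fst continuous_const).inter
      (isOpen_lt continuous_const continuous_snd)
  have hdisj : Disjoint {p : ℝ × ℝ | p.1 < 0 ∧ 0 < p.2}
      {p : ℝ × ℝ | ∃ z : V, p = (bA z z, bB z z)} := by
    rw [Set.disjoint_left]
    rintro p ⟨hp1, hp2⟩ ⟨z, rfl⟩
    exact absurd (h z (le_of_lt hp2)) (not_le.2 hp1)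
  obtain ⟨f, u₀, hfQ, hfW⟩ := geometric_hahn_banach_open hQconv hQopen hWconv hdisj
  set c : ℝ := f (1, 0) with hcdef
  set d : ℝ := f (0, 1) with hddef
  have hf : ∀ p : ℝ × ℝ, f p = p.1 * c + p.2 * d := by
    intro p
    have hp : p = p.1 • ((1:ℝ),(0:ℝ)) + p.2 • ((0:ℝ),(1:ℝ)) := by
      simp [Prod.ext_iff]
    conv_lhs => rw [hp]
    rw [map_add, map_smul, map_smul]
    simp [smul_eq_mul, hcdef, hddef]
  have hkey : ∀ ε t : ℝ, 0 < ε → 0 < t → -ε * c + t * d < u₀ := by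
    intro ε t hε ht
    have := hfQ (-ε, t) ⟨by simpa using hε, ht⟩
    rw [hf] at this
    simpa using this
  have hWmem : ∀ z : V, u₀ ≤ bA z z * c + bB z z * d := by
    intro z
    have := hfW (bA z z, bB z z) ⟨z, rfl⟩
    rw [hf] at this
    simpa using this
  have hu0le : u₀ ≤ 0 := by
    have := hWmem 0
    rw [hA.zero, hB.zero] at this
    simpa using this
  have hu0ge : 0 ≤ u₀ := by
    by_contra hu
    push_neg at hu
    have hdc : d - c < 0 := by have := hkey 1 1 one_pos one_pos; linarith
    have ht0 : 0 < u₀ / (2*(d - c)) := div_pos_of_neg_of_neg (by linarith) (by linarith)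
    have hne : d - c ≠ 0 := ne_of_lt hdc
    have := hkey (u₀/(2*(d-c))) (u₀/(2*(d-c))) ht0 ht0
    have heq : -(u₀/(2*(d-c))) * c + (u₀/(2*(d-c))) * d = u₀/2 := by
      field_simp
      ring
    rw [heq] at this
    linarith
  have hu0 : u₀ = 0 := le_antisymm hu0le hu0ge
  have hcnn : 0 ≤ c := by
    by_contra hcneg
    push_neg at hcneg
    have hε : 0 < (|d|+1)/(-c) := div_pos (by positivity) (by linarith)
    have hne : c ≠ 0 := ne_of_lt hcneg
    have := hkey ((|d|+1)/(-c)) 1 hε one_pos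
    have heq : -((|d|+1)/(-c)) * c = |d| + 1 := by
      rw [div_neg, neg_neg, div_mul_cancel₀ _ hne]
    rw [hu0] at this
    nlinarith [neg_abs_le d, heq]
  have hdnp : d ≤ 0 := by
    by_contra hdpos
    push_neg at hdpos
    have ht : 0 < (|c|+1)/d := div_pos (by positivity) hdpos
    have hne : d ≠ 0 := ne_of_gt hdpos
    have := hkey 1 ((|c|+1)/d) one_pos ht
    have heq : ((|c|+1)/d) * d = |c| + 1 := by field_simp
    rw [hu0] at this
    nlinarith [le_abs_self c, heq]
  have hcpos : 0 < c := by
    rcases lt_or_eq_of_le hcnn with h' | h'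
    · exact h'
    · exfalso
      obtain ⟨zb, hzb⟩ := slater
      have h1 := hWmem zb
      rw [hu0, ← h'] at h1
      have hd0 : d = 0 := by nlinarith
      have := hfQ (-1, 1) ⟨by norm_num, one_pos⟩
      rw [hf, hu0, ← h', hd0] at this
      simp at this
  refine ⟨-d/c, div_nonneg (by linarith) (le_of_lt hcpos), fun z => ?_⟩
  have h1 := hWmem z
  rw [hu0] at h1
  have hcne : c ≠ 0 := ne_of_gt hcpos
  have heq : bA z z - (-d/c) * bB z z = (bA z z * c + bB z z * d)/c := by
    field_simp
    ring
  rw [heq]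
  exact div_nonneg h1 (le_of_lt hcpos)
open Matrix

lemma dotMulVec_symm {n : ℕ} (A : Matrix (Fin n) (Fin n) ℝ) (hA : A.IsSymm)
    (x y : Fin n → ℝ) : x ⬝ᵥ A.mulVec y = y ⬝ᵥ A.mulVec x := by
  rw [Matrix.dotProduct_mulVec, ← Matrix.mulVec_transpose, hA.eq, dotProduct_comm]

/-- Homogenized bilinear form on `ℝ × (Fin n → ℝ)`. -/
def qbil {n : ℕ} (K11 : ℝ) (K12 : Fin n → ℝ) (K22 : Matrix (Fin n) (Fin n) ℝ)
    (p q : ℝ × (Fin n → ℝ)) : ℝ :=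
  K11 * p.1 * q.1 + p.1 * (K12 ⬝ᵥ q.2) + q.1 * (K12 ⬝ᵥ p.2) + p.2 ⬝ᵥ K22.mulVec q.2

lemma qbil_isBil {n : ℕ} (K11 : ℝ) (K12 : Fin n → ℝ) (K22 : Matrix (Fin n) (Fin n) ℝ)
    (hK : K22.IsSymm) : IsBil (qbil K11 K12 K22) := by
  constructor
  · intro x y z
    simp only [qbil, Prod.fst_add, Prod.snd_add, dotProduct_add, add_dotProduct]
    ring
  · intro c x z
    simp only [qbil, Prod.smul_fst, Prod.smul_snd, smul_eq_mul, smul_dotProduct,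
      dotProduct_smul]
    ring
  · intro x y
    simp only [qbil]
    rw [dotMulVec_symm K22 hK]
    ring

lemma qbil_one {n : ℕ} (K11 : ℝ) (K12 : Fin n → ℝ) (K22 : Matrix (Fin n) (Fin n) ℝ)
    (x : Fin n → ℝ) :
    qbil K11 K12 K22 (1, x) (1, x) = K11 + 2 * (K12 ⬝ᵥ x) + x ⬝ᵥ K22.mulVec x := by
  simp only [qbil]
  ring


/-- The classical S-lemma of Yakubovich (Theorem 1 of van Waarde–Camlibel–Mesbahi),
for quadratic functions `f(x) = M₁₁ + 2 M₁₂ x + xᵀ M₂₂ x` and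
`g(x) = N₁₁ + 2 N₁₂ x + xᵀ N₂₂ x`. -/
theorem classical_S_lemma {n : ℕ}
    (M11 N11 : ℝ) (M12 N12 : Fin n → ℝ) (M22 N22 : Matrix (Fin n) (Fin n) ℝ)
    (hM22 : M22.IsSymm) (hN22 : N22.IsSymm)
    (hSlater : ∃ xbar : Fin n → ℝ,
      0 < N11 + 2 * (N12 ⬝ᵥ xbar) + xbar ⬝ᵥ N22.mulVec xbar) :
    (∀ x : Fin n → ℝ, 0 ≤ N11 + 2 * (N12 ⬝ᵥ x) + x ⬝ᵥ N22.mulVec x →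
      0 ≤ M11 + 2 * (M12 ⬝ᵥ x) + x ⬝ᵥ M22.mulVec x) ↔
    ∃ α : ℝ, 0 ≤ α ∧ ∀ x : Fin n → ℝ,
      0 ≤ (M11 + 2 * (M12 ⬝ᵥ x) + x ⬝ᵥ M22.mulVec x) -
        α * (N11 + 2 * (N12 ⬝ᵥ x) + x ⬝ᵥ N22.mulVec x) := by
  obtain ⟨xbar, hxbar⟩ := hSlater
  set bM := qbil M11 M12 M22 with hbMdef
  set bN := qbil N11 N12 N22 with hbNdef
  have hM : IsBil bM := qbil_isBil M11 M12 M22 hM22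
  have hN : IsBil bN := qbil_isBil N11 N12 N22 hN22
  constructor
  · intro hfg
    -- the homogenized implication
    have hprem : ∀ z : ℝ × (Fin n → ℝ), 0 ≤ bN z z → 0 ≤ bM z z := by
      rintro ⟨t, x⟩ hz
      by_cases ht : t = 0
      · subst ht
        -- limiting argument
        set u : ℝ × (Fin n → ℝ) := (1, xbar) with hudef
        set w : ℝ × (Fin n → ℝ) := (0, x) with hwdef
        have hNu : 0 < bN u u := by
          rw [hbNdef, hudef, qbil_one]; exact hxbar
        set σ : ℝ := if 0 ≤ bN u w then 1 else -1 with hσdef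
        have hσ2 : σ^2 = 1 := by
          rw [hσdef]; split_ifs <;> norm_num
        have hσbw : 0 ≤ σ * bN u w := by
          rw [hσdef]; split_ifs with hc
          · linarith
          · push_neg at hc; nlinarith
        have hNww : 0 ≤ bN w w := hz
        have hcomb : ∀ s : ℝ, (1, xbar + (s*σ) • x) = u + s • (σ • w) := by
          intro s
          rw [hudef, hwdef]
          simp [Prod.ext_iff, smul_smul]
        have hquad : ∀ s : ℝ, 0 ≤ s →
            0 ≤ bM u u + (2 * (σ * bM u w)) * s + (bM w w) * s^2 := by
          intro s hs
          have hgN : 0 ≤ bN (u + s • (σ • w)) (u + s • (σ • w)) := by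
            rw [hN.expand1, hN.smulr, hN.smul2]
            nlinarith [mul_nonneg hs hσbw, mul_nonneg (mul_nonneg hs hs) hNww]
          rw [← hcomb s] at hgN
          rw [hbNdef, qbil_one] at hgN
          have hfM := hfg _ hgN
          rw [← qbil_one M11 M12 M22, ← hbMdef, hcomb s] at hfM
          rw [hM.expand1, hM.smulr, hM.smul2, hσ2] at hfM
          nlinarith [hfM]
        have := quad_coeff_nonneg hquad
        have hww : bM w w = bM (0, x) (0, x) := by rw [hwdef]
        linarith [this, hww ▸ this]
      · -- scaling argument
        have hvec : (t, x) = t • ((1:ℝ), t⁻¹ • x) := by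
          simp [Prod.ext_iff, smul_smul, mul_inv_cancel₀ ht]
        have hscaleN : bN (t, x) (t, x) = t^2 * bN (1, t⁻¹ • x) (1, t⁻¹ • x) := by
          rw [hvec, hN.smul2]
        have hscaleM : bM (t, x) (t, x) = t^2 * bM (1, t⁻¹ • x) (1, t⁻¹ • x) := by
          rw [hvec, hM.smul2]
        rw [hscaleN] at hz
        have ht2 : 0 < t^2 := by positivity
        have hgN : 0 ≤ bN (1, t⁻¹ • x) (1, t⁻¹ • x) := nonneg_of_mul_nonneg_right hz ht2
        rw [hbNdef, qbil_one] at hgN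
        have hfM := hfg _ hgN
        rw [← qbil_one M11 M12 M22, ← hbMdef] at hfM
        rw [hscaleM]
        positivity
    have hslater' : ∃ z : ℝ × (Fin n → ℝ), 0 < bN z z := by
      refine ⟨(1, xbar), ?_⟩
      rw [hbNdef, qbil_one]; exact hxbar
    obtain ⟨α, hα, hall⟩ := homogeneous_S hM hN hslater' hprem
    refine ⟨α, hα, fun x => ?_⟩
    have := hall (1, x)
    rw [hbMdef, hbNdef, qbil_one, qbil_one] at this
    exact this
  · rintro ⟨α, hα, hvs⟩ x hgx
    have := hvs x
    nlinarith [mul_nonneg hα hgx]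
end

section
/- Let f, g : ℝⁿ → ℝ be quadratic forms, i.e., f(x) = xᵀ M x and g(x) = xᵀ N x for symmetric real n×n matrices M and N. Suppose there exists x̄ ∈ ℝⁿ such that g(x̄) > 0. Then f(x) ≥ 0 for all x ∈ ℝⁿ such that g(x) > 0 if and only if there exists a scalar α ≥ 0 such that f(x) − α g(x) ≥ 0 for all x ∈ ℝⁿ (equivalently, M − αN is positive semidefinite). -/
open Matrix

private lemma symm_bilin' {n : ℕ} {A : Matrix (Fin n) (Fin n) ℝ} (hA : A.IsSymm)
    (x y : Fin n → ℝ) : x ⬝ᵥ A *ᵥ y = y ⬝ᵥ A *ᵥ x := by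
  rw [dotProduct_mulVec, ← mulVec_transpose, hA.eq, dotProduct_comm]

private lemma expand_quad' {n : ℕ} (A : Matrix (Fin n) (Fin n) ℝ) (x y : Fin n → ℝ) (s t : ℝ) :
    (s • x + t • y) ⬝ᵥ A *ᵥ (s • x + t • y) =
      s^2 * (x ⬝ᵥ A *ᵥ x) + s*t*(x ⬝ᵥ A *ᵥ y) + s*t*(y ⬝ᵥ A *ᵥ x) + t^2 * (y ⬝ᵥ A *ᵥ y) := by
  simp [add_dotProduct, dotProduct_add, mulVec_add, mulVec_smul, smul_dotProduct,
    dotProduct_smul, smul_eq_mul]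
  ring

private lemma nonneg_of_forall_pos' (a b c : ℝ) (h : ∀ ε : ℝ, 0 < ε → 0 ≤ a + b*ε + c*ε^2) :
    0 ≤ a := by
  have hcont : Filter.Tendsto (fun ε : ℝ => a + b*ε + c*ε^2)
      (nhdsWithin 0 (Set.Ioi 0)) (nhds a) := by
    have hc : Continuous (fun ε : ℝ => a + b*ε + c*ε^2) := by continuity
    have := (hc.tendsto 0).mono_left (nhdsWithin_le_nhds (s := Set.Ioi (0:ℝ)))
    simpa using this
  exact ge_of_tendsto hcont (eventually_nhdsWithin_of_forall fun ε hε => h ε hε)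

/-- Boundary lemma: under the hypotheses of the S-lemma, `g x = 0 → f x ≥ 0`. -/
private lemma boundary_lemma {n : ℕ}
    (M N : Matrix (Fin n) (Fin n) ℝ) (hN : N.IsSymm)
    (xbar : Fin n → ℝ) (hxbar : 0 < xbar ⬝ᵥ N.mulVec xbar)
    (H : ∀ x : Fin n → ℝ, 0 < x ⬝ᵥ N.mulVec x → 0 ≤ x ⬝ᵥ M.mulVec x)
    (x : Fin n → ℝ) (hx : x ⬝ᵥ N.mulVec x = 0) : 0 ≤ x ⬝ᵥ M.mulVec x := by
  set c : ℝ := x ⬝ᵥ N *ᵥ xbar with hc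
  set σ : ℝ := if 0 ≤ c then 1 else -1 with hσ
  have hσc : 0 ≤ σ * c := by
    rcases le_or_gt 0 c with h | h
    · simp [hσ, if_pos h, h]
    · simp only [hσ, if_neg (not_le.mpr h)]; nlinarith
  have hσ2 : σ^2 = 1 := by rcases le_or_gt 0 c with h | h <;> simp [hσ, h, not_le.mpr]
  apply nonneg_of_forall_pos' _ (σ * (x ⬝ᵥ M *ᵥ xbar + xbar ⬝ᵥ M *ᵥ x))
    (xbar ⬝ᵥ M *ᵥ xbar)
  intro ε hε
  have hgpos : 0 < ((1:ℝ) • x + (ε*σ) • xbar) ⬝ᵥ N *ᵥ ((1:ℝ) • x + (ε*σ) • xbar) := by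
    rw [expand_quad']
    rw [symm_bilin' hN xbar x]
    have h2 : (ε*σ)^2 = ε^2 := by rw [mul_pow, hσ2, mul_one]
    rw [h2, ← hc]
    nlinarith [hx, mul_nonneg hε.le hσc, mul_pos (pow_pos hε 2) hxbar]
  have := H _ hgpos
  rw [expand_quad'] at this
  calc (0:ℝ) ≤ _ := this
    _ = x ⬝ᵥ M *ᵥ x + σ * (x ⬝ᵥ M *ᵥ xbar + xbar ⬝ᵥ M *ᵥ x) * ε
        + xbar ⬝ᵥ M *ᵥ xbar * ε^2 := by
      have : (ε*σ)^2 = ε^2 := by rw [mul_pow, hσ2, mul_one]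
      rw [this]; ring

/-- Two-point lemma: if `g x < 0 < g y` then `f y * g x ≤ f x * g y`. -/
private lemma two_point_lemma {n : ℕ}
    (M N : Matrix (Fin n) (Fin n) ℝ) (hM : M.IsSymm) (hN : N.IsSymm)
    (H0 : ∀ z : Fin n → ℝ, z ⬝ᵥ N.mulVec z = 0 → 0 ≤ z ⬝ᵥ M.mulVec z)
    (x y : Fin n → ℝ) (hgx : x ⬝ᵥ N.mulVec x < 0) (hgy : 0 < y ⬝ᵥ N.mulVec y) :
    (y ⬝ᵥ M.mulVec y) * (x ⬝ᵥ N.mulVec x) ≤ (x ⬝ᵥ M.mulVec x) * (y ⬝ᵥ N.mulVec y) := by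
  set a : ℝ := x ⬝ᵥ N *ᵥ x
  set b : ℝ := y ⬝ᵥ N *ᵥ y
  set c : ℝ := x ⬝ᵥ N *ᵥ y with hcdef
  set p : ℝ := x ⬝ᵥ M *ᵥ x
  set r : ℝ := y ⬝ᵥ M *ᵥ y
  set q : ℝ := x ⬝ᵥ M *ᵥ y with hqdef
  have hab : c^2 - a*b ≥ 0 := by nlinarith
  set D : ℝ := Real.sqrt (c^2 - a*b) with hDdef
  have hD2 : D^2 = c^2 - a*b := Real.sq_sqrt hab
  have hDc : |c| ≤ D := by
    rw [hDdef, ← Real.sqrt_sq_eq_abs]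
    exact Real.sqrt_le_sqrt (by nlinarith)
  have key : ∀ s : ℝ, s^2 + 2*c*s + a*b = 0 →
      0 ≤ 2*s*(q*a - p*c) + a*(r*a - p*b) := by
    intro s hs
    have hg0 : (s • x + a • y) ⬝ᵥ N *ᵥ (s • x + a • y) = 0 := by
      rw [expand_quad', symm_bilin' hN y x, ← hcdef]
      nlinarith [hs]
    have hf := H0 _ hg0
    rw [expand_quad', symm_bilin' hM y x, ← hqdef] at hf
    have hp : x ⬝ᵥ M *ᵥ x = p := rfl
    have hr : y ⬝ᵥ M *ᵥ y = r := rfl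
    rw [hp, hr] at hf
    have hps : p * (s^2 + 2*c*s + a*b) = 0 := by rw [hs, mul_zero]
    linarith [hf, hps]
  have h1 := key (D - c) (by nlinarith)
  have h2 := key (-D - c) (by nlinarith)
  have habs := abs_le.mp hDc
  rcases le_or_gt (q*a - p*c) 0 with hK | hK
  · nlinarith [h1, habs.1, habs.2, hK]
  · nlinarith [h2, habs.1, habs.2, hK]

/-- The strict S-lemma with a single multiplier (Theorem 2 of
van Waarde–Camlibel–Mesbahi), for quadratic forms `f(x) = xᵀ M x`, `g(x) = xᵀ N x`. -/
theorem strict_S_lemma {n : ℕ}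
    (M N : Matrix (Fin n) (Fin n) ℝ) (hM : M.IsSymm) (hN : N.IsSymm)
    (hSlater : ∃ xbar : Fin n → ℝ, 0 < xbar ⬝ᵥ N.mulVec xbar) :
    (∀ x : Fin n → ℝ, 0 < x ⬝ᵥ N.mulVec x → 0 ≤ x ⬝ᵥ M.mulVec x) ↔
    ∃ α : ℝ, 0 ≤ α ∧
      (∀ x : Fin n → ℝ, 0 ≤ x ⬝ᵥ M.mulVec x - α * (x ⬝ᵥ N.mulVec x)) ∧
      (M - α • N).PosSemidef := by
  obtain ⟨xbar, hxbar⟩ := hSlater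
  constructor
  · intro H
    have H0 := boundary_lemma M N hN xbar hxbar H
    set S : Set ℝ := (fun x : Fin n → ℝ => (x ⬝ᵥ M.mulVec x) / (x ⬝ᵥ N.mulVec x)) ''
      {x | 0 < x ⬝ᵥ N.mulVec x} with hSdef
    have hSne : S.Nonempty := ⟨_, ⟨xbar, hxbar, rfl⟩⟩
    have hSbdd : ∀ t ∈ S, (0:ℝ) ≤ t := by
      rintro t ⟨y, hy, rfl⟩
      exact div_nonneg (H y hy) hy.le
    have hbdd : BddBelow S := ⟨0, fun t ht => hSbdd t ht⟩
    set α : ℝ := sInf S with hαdef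
    have hα0 : 0 ≤ α := le_csInf hSne hSbdd
    have hpt : ∀ x : Fin n → ℝ, 0 ≤ x ⬝ᵥ M.mulVec x - α * (x ⬝ᵥ N.mulVec x) := by
      intro x
      rcases lt_trichotomy (x ⬝ᵥ N.mulVec x) 0 with hlt | heq | hgt
      · have hlb : ∀ t ∈ S, (x ⬝ᵥ M.mulVec x) / (x ⬝ᵥ N.mulVec x) ≤ t := by
          rintro t ⟨y, hy, rfl⟩
          have key := two_point_lemma M N hM hN H0 x y hlt hy
          have hy' : 0 < y ⬝ᵥ N.mulVec y := hy
          dsimp only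
          rw [div_le_iff_of_neg hlt, div_mul_eq_mul_div, div_le_iff₀ hy']
          nlinarith [key]
        have hle : (x ⬝ᵥ M.mulVec x) / (x ⬝ᵥ N.mulVec x) ≤ α := le_csInf hSne hlb
        have := mul_le_mul_of_nonpos_right hle hlt.le
        rw [div_mul_cancel₀ _ (ne_of_lt hlt)] at this
        linarith
      · have := H0 x heq
        rw [heq]; linarith
      · have hle : α ≤ (x ⬝ᵥ M.mulVec x) / (x ⬝ᵥ N.mulVec x) :=
          csInf_le hbdd ⟨x, hgt, rfl⟩
        have := (le_div_iff₀ hgt).mp hle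
        linarith
    refine ⟨α, hα0, hpt, PosSemidef.of_dotProduct_mulVec_nonneg ?_ ?_⟩
    · rw [IsHermitian, conjTranspose_eq_transpose_of_trivial, transpose_sub,
        transpose_smul, hM.eq, hN.eq]
    · intro x
      have := hpt x
      have hexp : star x ⬝ᵥ (M - α • N) *ᵥ x
          = x ⬝ᵥ M.mulVec x - α * (x ⬝ᵥ N.mulVec x) := by
        simp [sub_mulVec, smul_mulVec, dotProduct_sub, dotProduct_smul, smul_eq_mul]
      rw [hexp]
      exact this
  · rintro ⟨α, hα, hpt, _⟩ x hgx
    have := hpt x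
    nlinarith [mul_nonneg hα hgx.le]
end
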